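/- arXiv:0808.2340 — 12 statements merged into one kernel-verified Lean document; each statement's English description precedes it below -/
import Mathlib

section
/- For all positive integers n and m, τ(nm) = Σ_{d | gcd(n,m)} μ(d) τ(n/d) τ(m/d), where τ is the number-of-divisors function and μ is the Möbius function. -/
open ArithmeticFunction Finset
open scoped ArithmeticFunction.Moebius

/-!
Both sides count the pairs `(a, b)` of coprime divisors `a ∣ n`, `b ∣ m`. For the left side,
`(a, b) ↦ a * (m / b)` is a bijection onto the divisors of `n * m`, with inverse
`d ↦ (d / gcd d m, m / gcd d m)`. For the right side, detect coprimality by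
`∑_{d ∣ gcd a b} μ d` and interchange the sums: the pairs with `d ∣ a` and `d ∣ b`
number `τ(n / d) τ(m / d)`.
-/

namespace Nat

theorem sum_divisors_moebius (k : ℕ) :
    ∑ d ∈ k.divisors, (μ d : ℤ) = if k = 1 then 1 else 0 := by
  rw [← coe_mul_zeta_apply, moebius_mul_coe_zeta, one_apply]

theorem card_filter_dvd_divisors {n d : ℕ} (hd : d ∣ n) :
    #{a ∈ n.divisors | d ∣ a} = #(n / d).divisors := by
  rcases eq_or_ne n 0 with rfl | hn
  · simp
  have hd0 : d ≠ 0 := ne_zero_of_dvd_ne_zero hn hd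
  refine card_nbij' (· / d) (d * ·) ?_ ?_ ?_ ?_
  · intro a ha
    simp only [coe_filter, mem_divisors, Set.mem_ofPred_eq, mem_coe] at ha ⊢
    exact ⟨Nat.div_dvd_div ha.2 ha.1.1, (div_ne_zero_iff_of_dvd hd).mpr ⟨hn, hd0⟩⟩
  · intro b hb
    simp only [coe_filter, mem_divisors, Set.mem_ofPred_eq, mem_coe] at hb ⊢
    exact ⟨⟨(Nat.mul_dvd_mul_left d hb.1).trans (Nat.mul_div_cancel' hd).dvd, hn⟩,
      dvd_mul_right d b⟩
  · intro a ha
    simp only [coe_filter, Set.mem_ofPred_eq] at ha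
    exact Nat.mul_div_cancel' ha.2
  · intro b _
    exact Nat.mul_div_cancel_left b (Nat.pos_of_ne_zero hd0)

theorem card_divisors_mul_eq_card_coprime (n m : ℕ) :
    #(n * m).divisors = #{x ∈ n.divisors ×ˢ m.divisors | Coprime x.1 x.2} := by
  rcases eq_or_ne n 0 with rfl | hn
  · simp
  rcases eq_or_ne m 0 with rfl | hm
  · simp
  refine card_nbij' (fun d => (d / gcd d m, m / gcd d m)) (fun x => x.1 * (m / x.2))
    ?_ ?_ ?_ ?_
  · intro d hd
    simp only [mem_coe, mem_divisors, coe_filter, mem_product, Set.mem_ofPred_eq] at hd ⊢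
    have hg : 0 < gcd d m := gcd_pos_of_pos_right d (Nat.pos_of_ne_zero hm)
    have hcop := coprime_div_gcd_div_gcd hg
    have hdvd : d / gcd d m * gcd d m ∣ n * (m / gcd d m) * gcd d m := by
      rw [Nat.div_mul_cancel (gcd_dvd_left d m), Nat.mul_assoc,
        Nat.div_mul_cancel (gcd_dvd_right d m)]
      exact hd.1
    exact ⟨⟨⟨hcop.dvd_of_dvd_mul_right (Nat.dvd_of_mul_dvd_mul_right hg hdvd), hn⟩,
      div_dvd_of_dvd (gcd_dvd_right d m), hm⟩, hcop⟩
  · rintro ⟨a, b⟩ hx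
    simp only [mem_coe, mem_divisors, coe_filter, mem_product, Set.mem_ofPred_eq] at hx ⊢
    exact ⟨mul_dvd_mul hx.1.1.1 (div_dvd_of_dvd hx.1.2.1), mul_ne_zero hn hm⟩
  · intro d hd
    dsimp only
    rw [Nat.div_div_self (gcd_dvd_right d m) hm, Nat.div_mul_cancel (gcd_dvd_left d m)]
  · rintro ⟨a, b⟩ hx
    simp only [mem_divisors, coe_filter, mem_product, Set.mem_ofPred_eq] at hx
    obtain ⟨⟨⟨-, -⟩, hb, -⟩, hab⟩ := hx
    have hc : 0 < m / b :=
      Nat.pos_of_ne_zero ((div_ne_zero_iff_of_dvd hb).mpr ⟨hm, ne_zero_of_dvd_ne_zero hm hb⟩)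
    have hgcd : gcd (a * (m / b)) m = m / b := by
      calc gcd (a * (m / b)) m = gcd (a * (m / b)) (b * (m / b)) := by
            rw [Nat.mul_div_cancel' hb]
        _ = m / b := by rw [Nat.gcd_mul_right, hab.gcd_eq_one, Nat.one_mul]
    simp only [hgcd, Nat.mul_div_cancel a hc, Nat.div_div_self hb hm]

theorem card_coprime_divisors_eq_sum_moebius (n m : ℕ) :
    (#{x ∈ n.divisors ×ˢ m.divisors | Coprime x.1 x.2} : ℤ) =
      ∑ d ∈ (gcd n m).divisors, (μ d : ℤ) * #(n / d).divisors * #(m / d).divisors := by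
  have hsum : ∀ x ∈ n.divisors ×ˢ m.divisors, (if Coprime x.1 x.2 then 1 else 0 : ℤ) =
      ∑ d ∈ (gcd n m).divisors, if d ∣ x.1 ∧ d ∣ x.2 then (μ d : ℤ) else 0 := by
    rintro ⟨a, b⟩ hx
    simp only [mem_product, mem_divisors] at hx
    have hg : gcd a b ∣ gcd n m :=
      Nat.dvd_gcd ((gcd_dvd_left a b).trans hx.1.1) ((gcd_dvd_right a b).trans hx.2.1)
    simp only [← dvd_gcd_iff, ← sum_filter, coprime_iff_gcd_eq_one, ← sum_divisors_moebius,
      divisors_filter_dvd_of_dvd (gcd_ne_zero_left hx.1.2) hg]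
  calc (#{x ∈ n.divisors ×ˢ m.divisors | Coprime x.1 x.2} : ℤ)
      = ∑ x ∈ n.divisors ×ˢ m.divisors, if Coprime x.1 x.2 then 1 else 0 := by
        rw [sum_boole]
    _ = ∑ d ∈ (gcd n m).divisors, ∑ x ∈ n.divisors ×ˢ m.divisors,
          if d ∣ x.1 ∧ d ∣ x.2 then (μ d : ℤ) else 0 := by
        rw [sum_congr rfl hsum, sum_comm]
    _ = _ := by
        refine sum_congr rfl fun d hd => ?_
        have hdg := dvd_of_mem_divisors hd
        rw [← card_filter_dvd_divisors (hdg.trans (gcd_dvd_left n m)),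
          ← card_filter_dvd_divisors (hdg.trans (gcd_dvd_right n m)), sum_product,
          ← sum_boole, ← sum_boole, mul_assoc, sum_mul_sum, mul_sum]
        refine sum_congr rfl fun a _ => ?_
        rw [mul_sum]
        refine sum_congr rfl fun b _ => ?_
        rw [ite_zero_mul_ite_zero, mul_one, mul_ite, mul_one, mul_zero]

end Nat

open ArithmeticFunction in
theorem stmt0_general (n m : ℕ) :
    ((n * m).divisors.card : ℤ) =
      ∑ d ∈ (Nat.gcd n m).divisors,
        (moebius d : ℤ) * ((n / d).divisors.card : ℤ) * ((m / d).divisors.card : ℤ) := by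
  rw [Nat.card_divisors_mul_eq_card_coprime, Nat.card_coprime_divisors_eq_sum_moebius]

open ArithmeticFunction in
theorem stmt0 (n m : ℕ) (hn : 0 < n) (hm : 0 < m) :
    ((n * m).divisors.card : ℤ) =
      ∑ d ∈ (Nat.gcd n m).divisors,
        (moebius d : ℤ) * ((n / d).divisors.card : ℤ) * ((m / d).divisors.card : ℤ) :=
  stmt0_general n m
end

section
/- For all positive integers n₁, n₂, n₃, one has τ(n₁n₂n₃) = Σ μ(d₁d₂)μ(d₃) / (2^{ω(gcd(d₁,n₁))+ω(gcd(d₂,n₂))}) · τ(n₁/(d₂d₃)) τ(n₂/(d₁d₃)) τ(n₃/(d₁d₂)), where the sum is over triples (d₁,d₂,d₃) of positive integers with d_i d_j | n_k for all permutations {i,j,k} = {1,2,3}. -/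
/-!
Both sides are multiplicative in the triple `(n₁, n₂, n₃)` along coprime splittings of
`n₁ n₂ n₃`: on the right, a coprime splitting of the `nᵢ` splits every admissible triple
`(d₁, d₂, d₃)` and each factor of the summand (the Möbius values, `ω` of the gcd's, `τ` of the
quotients) splits with it. So it suffices to compare prime powers `nᵢ = p ^ aᵢ`, where only
`d₁ d₂, d₃ ∈ {1, p}` survive the Möbius factors and the eight remaining terms add up to
`a₁ + a₂ + a₃ + 1 = τ (p ^ (a₁ + a₂ + a₃))`.
-/

open ArithmeticFunction Finset
open scoped ArithmeticFunction.Moebius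

namespace Nat

theorem gcd_pow_pow (p a b : ℕ) : gcd (p ^ a) (p ^ b) = p ^ min a b := by
  rcases le_total a b with h | h
  · rw [min_eq_left h, gcd_eq_left (pow_dvd_pow p h)]
  · rw [min_eq_right h, gcd_eq_right (pow_dvd_pow p h)]

theorem card_divisors_prime_pow {p : ℕ} (hp : p.Prime) (k : ℕ) : #(p ^ k).divisors = k + 1 := by
  rw [← sigma_zero_apply, sigma_zero_apply_prime_pow hp]

theorem Coprime.sum_divisors_mul_eq_sum_sum {M : Type*} [AddCommMonoid M] {m n : ℕ}
    (h : m.Coprime n) (f : ℕ → M) :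
    ∑ d ∈ (m * n).divisors, f d = ∑ a ∈ m.divisors, ∑ b ∈ n.divisors, f (a * b) := by
  rw [Nat.divisors_mul, Finset.mul_def, sum_image h.mul_injOn_divisors, sum_product]

theorem Coprime.mul_dvd_mul_iff {x y u v : ℕ} (hxv : x.Coprime v) (hyu : y.Coprime u) :
    x * y ∣ u * v ↔ x ∣ u ∧ y ∣ v :=
  ⟨fun h => ⟨hxv.dvd_of_dvd_mul_right ((_root_.dvd_mul_right x y).trans h),
    hyu.dvd_of_dvd_mul_left ((_root_.dvd_mul_left y x).trans h)⟩, fun h => mul_dvd_mul h.1 h.2⟩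

theorem Coprime.gcd_mul_mul {x y u v : ℕ} (hxv : x.Coprime v) (hyu : y.Coprime u)
    (huv : u.Coprime v) : gcd (x * y) (u * v) = gcd x u * gcd y v := by
  rw [huv.gcd_mul, hyu.gcd_mul_right_cancel, mul_comm x y, hxv.gcd_mul_right_cancel]

theorem Coprime.card_primeFactors_mul {a b : ℕ} (h : a.Coprime b) :
    #(a * b).primeFactors = #a.primeFactors + #b.primeFactors := by
  rw [h.primeFactors_mul, card_union_of_disjoint h.disjoint_primeFactors]

end Nat

theorem Finset.sum_eq_sum_of_ne_zero {ι M : Type*} [AddCommMonoid M] {s t : Finset ι}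
    {f : ι → M} (h : ∀ x, f x ≠ 0 → x ∈ s ∧ x ∈ t) : ∑ x ∈ s, f x = ∑ x ∈ t, f x := by
  classical
  rw [← sum_filter_ne_zero, ← sum_filter_ne_zero t]
  congr 1
  ext x
  simp only [mem_filter]
  exact ⟨fun hx => ⟨(h x hx.2).2, hx.2⟩, fun hx => ⟨(h x hx.2).1, hx.2⟩⟩

theorem ArithmeticFunction.moebius_prime_pow_eq_zero {p m : ℕ} (hp : p.Prime) (hm : 2 ≤ m) :
    μ (p ^ m) = 0 := by
  rw [moebius_apply_prime_pow hp (by omega), if_neg (by omega)]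

def IsMultiplicative₃ {R : Type*} [CommMonoid R] (f : ℕ → ℕ → ℕ → R) : Prop :=
  f 1 1 1 = 1 ∧ ∀ {n₁ n₂ n₃ m₁ m₂ m₃ : ℕ}, (n₁ * n₂ * n₃).Coprime (m₁ * m₂ * m₃) →
    f (n₁ * m₁) (n₂ * m₂) (n₃ * m₃) = f n₁ n₂ n₃ * f m₁ m₂ m₃

namespace IsMultiplicative₃

variable {R : Type*} [CommMonoid R] {f g : ℕ → ℕ → ℕ → R}

theorem map_prod_pow (hf : IsMultiplicative₃ f) {s : Finset ℕ} (hs : ∀ p ∈ s, p.Prime)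
    (a b c : ℕ → ℕ) :
    f (∏ p ∈ s, p ^ a p) (∏ p ∈ s, p ^ b p) (∏ p ∈ s, p ^ c p) =
      ∏ p ∈ s, f (p ^ a p) (p ^ b p) (p ^ c p) := by
  induction s using Finset.induction_on with
  | empty => exact hf.1
  | insert q s hq ih =>
    have hprime : ∀ p ∈ s, p.Prime := fun p hp => hs p (mem_insert_of_mem hp)
    have hcop : (q ^ a q * q ^ b q * q ^ c q).Coprime
        ((∏ p ∈ s, p ^ a p) * (∏ p ∈ s, p ^ b p) * ∏ p ∈ s, p ^ c p) := by
      simp only [← prod_mul_distrib, ← pow_add]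
      exact Nat.Coprime.prod_right fun p hp => Nat.Coprime.pow _ _ <|
        (Nat.coprime_primes (hs q (mem_insert_self q s)) (hprime p hp)).2
          (ne_of_mem_of_not_mem hp hq).symm
    simp only [prod_insert hq]
    rw [hf.2 hcop, ih hprime]

theorem eq_of_prime_pow (hf : IsMultiplicative₃ f) (hg : IsMultiplicative₃ g)
    (h : ∀ p a b c : ℕ, p.Prime → f (p ^ a) (p ^ b) (p ^ c) = g (p ^ a) (p ^ b) (p ^ c))
    {n₁ n₂ n₃ : ℕ} (h₁ : n₁ ≠ 0) (h₂ : n₂ ≠ 0) (h₃ : n₃ ≠ 0) :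
    f n₁ n₂ n₃ = g n₁ n₂ n₃ := by
  obtain ⟨s, hs, e₁, e₂, e₃⟩ : ∃ s : Finset ℕ, (∀ p ∈ s, p.Prime) ∧
      ∏ p ∈ s, p ^ padicValNat p n₁ = n₁ ∧ ∏ p ∈ s, p ^ padicValNat p n₂ = n₂ ∧
        ∏ p ∈ s, p ^ padicValNat p n₃ = n₃ :=
    ⟨_, fun p hp => (mem_filter.1 hp).2,
      Nat.prod_pow_prime_padicValNat n₁ h₁ (n₁ + n₂ + n₃ + 1) (by omega),
      Nat.prod_pow_prime_padicValNat n₂ h₂ _ (by omega),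
      Nat.prod_pow_prime_padicValNat n₃ h₃ _ (by omega)⟩
  rw [← e₁, ← e₂, ← e₃, hf.map_prod_pow hs, hg.map_prod_pow hs]
  exact prod_congr rfl fun p hp => h p _ _ _ (hs p hp)

end IsMultiplicative₃

noncomputable def divisorTerm (n₁ n₂ n₃ d₁ d₂ d₃ : ℕ) : ℚ :=
  if d₂ * d₃ ∣ n₁ ∧ d₁ * d₃ ∣ n₂ ∧ d₁ * d₂ ∣ n₃ then
    (μ (d₁ * d₂) * μ d₃ : ℚ) / 2 ^ (#(d₁.gcd n₁).primeFactors + #(d₂.gcd n₂).primeFactors) *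
      (#(n₁ / (d₂ * d₃)).divisors * (#(n₂ / (d₁ * d₃)).divisors * #(n₃ / (d₁ * d₂)).divisors) : ℚ)
  else 0

noncomputable def divisorSum (n₁ n₂ n₃ : ℕ) : ℚ :=
  ∑ d₁ ∈ (n₂.gcd n₃).divisors, ∑ d₂ ∈ (n₁.gcd n₃).divisors, ∑ d₃ ∈ (n₁.gcd n₂).divisors,
    divisorTerm n₁ n₂ n₃ d₁ d₂ d₃

theorem divisorTerm_mul {n₁ n₂ n₃ m₁ m₂ m₃ d₁ d₂ d₃ e₁ e₂ e₃ : ℕ}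
    (h : (n₁ * n₂ * n₃ * (d₁ * d₂ * d₃)).Coprime (m₁ * m₂ * m₃ * (e₁ * e₂ * e₃))) :
    divisorTerm (n₁ * m₁) (n₂ * m₂) (n₃ * m₃) (d₁ * e₁) (d₂ * e₂) (d₃ * e₃) =
      divisorTerm n₁ n₂ n₃ d₁ d₂ d₃ * divisorTerm m₁ m₂ m₃ e₁ e₂ e₃ := by
  obtain ⟨hd₂₃m₁, hn₁e₂₃, hd₁₃m₂, hn₂e₁₃, hd₁₂m₃, hn₃e₁₂, hd₁₂e₁₂, hd₃e₃, hd₁m₁, hn₁e₁, hd₂m₂,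
      hn₂e₂, hn₁m₁, hn₂m₂, hn₃m₃⟩ :
      (d₂ * d₃).Coprime m₁ ∧ n₁.Coprime (e₂ * e₃) ∧ (d₁ * d₃).Coprime m₂ ∧
      n₂.Coprime (e₁ * e₃) ∧ (d₁ * d₂).Coprime m₃ ∧ n₃.Coprime (e₁ * e₂) ∧
      (d₁ * d₂).Coprime (e₁ * e₂) ∧ d₃.Coprime e₃ ∧ d₁.Coprime m₁ ∧ n₁.Coprime e₁ ∧
      d₂.Coprime m₂ ∧ n₂.Coprime e₂ ∧ n₁.Coprime m₁ ∧ n₂.Coprime m₂ ∧ n₃.Coprime m₃ := by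
    simp only [Nat.coprime_mul_iff_left, Nat.coprime_mul_iff_right] at h ⊢
    tauto
  unfold divisorTerm
  simp only [mul_mul_mul_comm _ e₁, mul_mul_mul_comm _ e₂]
  simp only [hd₂₃m₁.mul_dvd_mul_iff hn₁e₂₃.symm, hd₁₃m₂.mul_dvd_mul_iff hn₂e₁₃.symm,
    hd₁₂m₃.mul_dvd_mul_iff hn₃e₁₂.symm]
  rw [ite_zero_mul_ite_zero]
  refine ite_congr (propext (by tauto)) (fun ⟨⟨hd₁, hd₂, hd₃⟩, he₁, he₂, he₃⟩ => ?_) fun _ => rfl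
  rw [isMultiplicative_moebius.map_mul_of_coprime hd₁₂e₁₂,
    isMultiplicative_moebius.map_mul_of_coprime hd₃e₃, hd₁m₁.gcd_mul_mul hn₁e₁.symm hn₁m₁,
    hd₂m₂.gcd_mul_mul hn₂e₂.symm hn₂m₂, (hn₁m₁.gcd_both d₁ e₁).card_primeFactors_mul,
    (hn₂m₂.gcd_both d₂ e₂).card_primeFactors_mul, ← Nat.div_mul_div_comm hd₁ he₁,
    ← Nat.div_mul_div_comm hd₂ he₂, ← Nat.div_mul_div_comm hd₃ he₃,
    Nat.Coprime.card_divisors_mul ((hn₁m₁.coprime_div_left hd₁).coprime_div_right he₁),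
    Nat.Coprime.card_divisors_mul ((hn₂m₂.coprime_div_left hd₂).coprime_div_right he₂),
    Nat.Coprime.card_divisors_mul ((hn₃m₃.coprime_div_left hd₃).coprime_div_right he₃)]
  push_cast
  ring

theorem mul_mul_dvd_of_mem_divisors_gcd {n₁ n₂ n₃ d₁ d₂ d₃ : ℕ}
    (h₁ : d₁ ∈ (n₂.gcd n₃).divisors) (h₂ : d₂ ∈ (n₁.gcd n₃).divisors)
    (h₃ : d₃ ∈ (n₁.gcd n₂).divisors) : d₁ * d₂ * d₃ ∣ n₁ * n₂ * n₃ :=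
  calc d₁ * d₂ * d₃ = d₃ * d₁ * d₂ := by ring
    _ ∣ n₁ * n₂ * n₃ :=
      mul_dvd_mul (mul_dvd_mul ((Nat.dvd_of_mem_divisors h₃).trans (Nat.gcd_dvd_left _ _))
        ((Nat.dvd_of_mem_divisors h₁).trans (Nat.gcd_dvd_left _ _)))
        ((Nat.dvd_of_mem_divisors h₂).trans (Nat.gcd_dvd_right _ _))

theorem isMultiplicative₃_divisorSum : IsMultiplicative₃ divisorSum := by
  refine ⟨by simp [divisorSum, divisorTerm], fun {n₁ n₂ n₃ m₁ m₂ m₃} h => ?_⟩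
  have hcop : ∀ {x y : ℕ}, x ∣ n₁ * n₂ * n₃ → y ∣ m₁ * m₂ * m₃ → x.Coprime y :=
    fun hx hy => (h.coprime_dvd_left hx).coprime_dvd_right hy
  have hgcd : ∀ {i j k l : ℕ}, i ∣ n₁ * n₂ * n₃ → j ∣ n₁ * n₂ * n₃ → k ∣ m₁ * m₂ * m₃ →
      l ∣ m₁ * m₂ * m₃ → Nat.gcd (i * k) (j * l) = Nat.gcd i j * Nat.gcd k l :=
    fun hi hj hk hl => (hcop hi hl).gcd_mul_mul (hcop hj hk).symm (hcop hj hl)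
  have hdvd : ∀ a b c : ℕ, a ∣ a * b * c ∧ b ∣ a * b * c ∧ c ∣ a * b * c := fun a b c =>
    ⟨Dvd.intro (b * c) (by ring), Dvd.intro (a * c) (by ring), Dvd.intro_left _ rfl⟩
  obtain ⟨hn₁, hn₂, hn₃⟩ := hdvd n₁ n₂ n₃
  obtain ⟨hm₁, hm₂, hm₃⟩ := hdvd m₁ m₂ m₃
  unfold divisorSum
  rw [hgcd hn₂ hn₃ hm₂ hm₃, hgcd hn₁ hn₃ hm₁ hm₃, hgcd hn₁ hn₂ hm₁ hm₂]
  simp only [Nat.Coprime.sum_divisors_mul_eq_sum_sum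
      (hcop ((Nat.gcd_dvd_left _ _).trans hn₁) ((Nat.gcd_dvd_left _ _).trans hm₁)),
    Nat.Coprime.sum_divisors_mul_eq_sum_sum
      (hcop ((Nat.gcd_dvd_left _ _).trans hn₂) ((Nat.gcd_dvd_left _ _).trans hm₂)),
    sum_mul_sum]
  refine sum_congr rfl fun d₁ hd₁ => sum_congr rfl fun e₁ he₁ => sum_congr rfl fun d₂ hd₂ =>
    sum_congr rfl fun e₂ he₂ => sum_congr rfl fun d₃ hd₃ => sum_congr rfl fun e₃ he₃ =>
      divisorTerm_mul (((h.pow 2 2).coprime_dvd_left ?_).coprime_dvd_right ?_)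
  · exact pow_two (n₁ * n₂ * n₃) ▸ mul_dvd_mul_left _ (mul_mul_dvd_of_mem_divisors_gcd hd₁ hd₂ hd₃)
  · exact pow_two (m₁ * m₂ * m₃) ▸ mul_dvd_mul_left _ (mul_mul_dvd_of_mem_divisors_gcd he₁ he₂ he₃)

theorem divisorTerm_prime_pow {p : ℕ} (hp : p.Prime) (a b c i j k : ℕ) :
    divisorTerm (p ^ a) (p ^ b) (p ^ c) (p ^ i) (p ^ j) (p ^ k) =
      if j + k ≤ a ∧ i + k ≤ b ∧ i + j ≤ c then
        (μ (p ^ (i + j)) * μ (p ^ k) : ℚ) /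
            2 ^ (#(p ^ min i a).primeFactors + #(p ^ min j b).primeFactors) *
          ((a - (j + k) + 1 : ℕ) * ((b - (i + k) + 1 : ℕ) * (c - (i + j) + 1 : ℕ)))
      else 0 := by
  simp only [divisorTerm, ← pow_add, Nat.pow_dvd_pow_iff_le_right hp.one_lt, Nat.gcd_pow_pow]
  refine ite_congr rfl (fun ⟨ha, hb, hc⟩ => ?_) fun _ => rfl
  rw [Nat.pow_div ha hp.pos, Nat.pow_div hb hp.pos, Nat.pow_div hc hp.pos,
    Nat.card_divisors_prime_pow hp, Nat.card_divisors_prime_pow hp, Nat.card_divisors_prime_pow hp]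

theorem divisorSum_prime_pow {p : ℕ} (hp : p.Prime) (a b c : ℕ) :
    divisorSum (p ^ a) (p ^ b) (p ^ c) = a + b + c + 1 := by
  simp only [divisorSum, Nat.gcd_pow_pow, Nat.sum_divisors_prime_pow hp, divisorTerm_prime_pow hp]
  simp_rw [← sum_product']
  rw [sum_eq_sum_of_ne_zero (t := range 2 ×ˢ range 2 ×ˢ range 2)]
  · simp only [sum_product, sum_range_succ, sum_range_zero, zero_add]
    rcases a with _ | _ | a <;> rcases b with _ | _ | b <;> rcases c with _ | _ | c <;>
      simp [moebius_apply_prime hp, hp, moebius_prime_pow_eq_zero hp] <;> ring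
  · rintro ⟨i, j, k⟩ hx
    dsimp only at hx
    split_ifs at hx with hcond
    · have hij : i + j < 2 := by
        by_contra hij
        simp [moebius_prime_pow_eq_zero hp (not_lt.1 hij)] at hx
      have hk : k < 2 := by
        by_contra hk
        simp [moebius_prime_pow_eq_zero hp (not_lt.1 hk)] at hx
      simp only [mem_product, mem_range]
      omega
    · exact absurd rfl hx

theorem isMultiplicative₃_card_divisors_mul :
    IsMultiplicative₃ fun n₁ n₂ n₃ => (#(n₁ * n₂ * n₃).divisors : ℚ) := by
  refine ⟨by simp, fun {n₁ n₂ n₃ m₁ m₂ m₃} h => ?_⟩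
  dsimp only
  rw [show n₁ * m₁ * (n₂ * m₂) * (n₃ * m₃) = n₁ * n₂ * n₃ * (m₁ * m₂ * m₃) by ring,
    h.card_divisors_mul, Nat.cast_mul]

open ArithmeticFunction in
theorem stmt1 (n₁ n₂ n₃ : ℕ) (h₁ : 0 < n₁) (h₂ : 0 < n₂) (h₃ : 0 < n₃) :
    ((n₁ * n₂ * n₃).divisors.card : ℚ) =
      ∑ d₁ ∈ (Nat.gcd n₂ n₃).divisors, ∑ d₂ ∈ (Nat.gcd n₁ n₃).divisors,
        ∑ d₃ ∈ (Nat.gcd n₁ n₂).divisors,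
          if d₂ * d₃ ∣ n₁ ∧ d₁ * d₃ ∣ n₂ ∧ d₁ * d₂ ∣ n₃ then
            ((moebius (d₁ * d₂) : ℚ) * (moebius d₃ : ℚ) /
                2 ^ ((Nat.gcd d₁ n₁).primeFactors.card + (Nat.gcd d₂ n₂).primeFactors.card)) *
              (((n₁ / (d₂ * d₃)).divisors.card : ℚ) *
                (((n₂ / (d₁ * d₃)).divisors.card : ℚ) * ((n₃ / (d₁ * d₂)).divisors.card : ℚ)))
          else 0 := by
  show _ = divisorSum n₁ n₂ n₃
  refine isMultiplicative₃_card_divisors_mul.eq_of_prime_pow isMultiplicative₃_divisorSum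
    (fun p a b c hp => ?_) h₁.ne' h₂.ne' h₃.ne'
  rw [← pow_add, ← pow_add, Nat.card_divisors_prime_pow hp, divisorSum_prime_pow hp]
  push_cast
  ring
end

section
/- Let L₁ = a₁x₁ + b₁x₂ and L₂ = a₂x₁ + b₂x₂ be non-proportional integral linear forms and Q a binary quadratic form irreducible over ℚ, with resultants Δ₁₂ = a₁b₂ − a₂b₁ and Δ_{i3} = Q(−b_i, a_i). If for some pair 1 ≤ i < j ≤ 3 one has v_p(Δ_{ij}) < min{ν_i, ν_j}, then there is no (x₁,x₂) ∈ ℤ² with gcd(x₁,x₂,p) = 1 satisfying p^{ν₁} | L₁(x), p^{ν₂} | L₂(x), p^{ν₃} | Q(x). -/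
/-!
Each resultant `Δᵢⱼ` times `x₁ᵉ`, and times `x₂ᵉ` (`e = 1` for `Δ₁₂`, `e = 2` otherwise),
is an integral combination of the two forms involved. If `p^{min νᵢ νⱼ}` divides both forms,
it therefore divides `Δᵢⱼ x₁ᵉ` and `Δᵢⱼ x₂ᵉ`; since `p` does not divide both `x₁` and `x₂`,
it divides `Δᵢⱼ`, which is nonzero (for `Δᵢ₃` because `Q` has no rational linear factor),
so `v_p(Δᵢⱼ) ≥ min νᵢ νⱼ`.
-/

section Resultant

variable {R : Type*} [CommRing R] {a₁ b₁ a₂ b₂ a₃ b₃ c₃ x y : R}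

theorem linear_resultant_mul_left_mem_span :
    (a₁ * b₂ - a₂ * b₁) * x ∈ Ideal.span {a₁ * x + b₁ * y, a₂ * x + b₂ * y} :=
  Ideal.mem_span_pair.2 ⟨b₂, -b₁, by ring⟩

theorem linear_resultant_mul_right_mem_span :
    (a₁ * b₂ - a₂ * b₁) * y ∈ Ideal.span {a₁ * x + b₁ * y, a₂ * x + b₂ * y} :=
  Ideal.mem_span_pair.2 ⟨-a₂, a₁, by ring⟩

theorem quadratic_resultant_mul_sq_left_mem_span :
    (a₃ * b₁ ^ 2 + b₃ * a₁ ^ 2 - c₃ * a₁ * b₁) * x ^ 2 ∈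
      Ideal.span {a₁ * x + b₁ * y, a₃ * x ^ 2 + b₃ * y ^ 2 + c₃ * x * y} :=
  Ideal.mem_span_pair.2 ⟨b₃ * a₁ * x - b₃ * b₁ * y - c₃ * b₁ * x, b₁ ^ 2, by ring⟩

theorem quadratic_resultant_mul_sq_right_mem_span :
    (a₃ * b₁ ^ 2 + b₃ * a₁ ^ 2 - c₃ * a₁ * b₁) * y ^ 2 ∈
      Ideal.span {a₁ * x + b₁ * y, a₃ * x ^ 2 + b₃ * y ^ 2 + c₃ * x * y} :=
  Ideal.mem_span_pair.2 ⟨a₃ * b₁ * y - a₃ * a₁ * x - c₃ * a₁ * y, a₁ ^ 2, by ring⟩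

end Resultant

theorem dvd_of_mem_span_pair {R : Type*} [CommSemiring R] {d f g z : R} (hf : d ∣ f) (hg : d ∣ g)
    (hz : z ∈ Ideal.span {f, g}) : d ∣ z := by
  obtain ⟨u, v, rfl⟩ := Ideal.mem_span_pair.1 hz
  exact hf.linear_comb hg u v

theorem Prime.pow_dvd_of_dvd_mul_of_dvd_mul {M : Type*} [CommMonoidWithZero M]
    [IsCancelMulZero M] {q D u v : M} (hq : Prime q) (huv : ¬ q ∣ u ∨ ¬ q ∣ v) {m : ℕ}
    (hu : q ^ m ∣ D * u) (hv : q ^ m ∣ D * v) : q ^ m ∣ D := by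
  rcases huv with hu' | hv'
  · exact hq.pow_dvd_of_dvd_mul_right m hu' hu
  · exact hq.pow_dvd_of_dvd_mul_right m hv' hv

theorem min_le_padicValInt_of_mem_span {p : ℕ} (hp : Prime (p : ℤ)) {D f g u v : ℤ} {m n : ℕ}
    (hD : D ≠ 0) (huv : ¬ (p : ℤ) ∣ u ∨ ¬ (p : ℤ) ∣ v)
    (hf : (p : ℤ) ^ m ∣ f) (hg : (p : ℤ) ^ n ∣ g)
    (hDu : D * u ∈ Ideal.span {f, g}) (hDv : D * v ∈ Ideal.span {f, g}) :
    min m n ≤ padicValInt p D := by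
  have hf' := (pow_dvd_pow (p : ℤ) (min_le_left m n)).trans hf
  have hg' := (pow_dvd_pow (p : ℤ) (min_le_right m n)).trans hg
  have hdvd := hp.pow_dvd_of_dvd_mul_of_dvd_mul huv
    (dvd_of_mem_span_pair hf' hg' hDu) (dvd_of_mem_span_pair hf' hg' hDv)
  have hp1 : p ≠ 1 := by rintro rfl; exact hp.not_isUnit isUnit_one
  exact ((padicValInt_dvd_iff_of_ne_one hp1 _ D).1 hdvd).resolve_left hD

theorem isSquare_of_mul_sq_eq_sq {d a v : ℤ} (ha : a ≠ 0) (h : d * a ^ 2 = v ^ 2) :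
    IsSquare d := by
  rw [← Rat.isSquare_intCast_iff]
  have ha' : (a : ℚ) ≠ 0 := by exact_mod_cast ha
  refine ⟨v / a, ?_⟩
  field_simp
  exact_mod_cast h

theorem quadratic_resultant_ne_zero {a b a₃ b₃ c₃ : ℤ} (hab : a ≠ 0 ∨ b ≠ 0)
    (hirr : ¬ IsSquare (c₃ ^ 2 - 4 * a₃ * b₃)) :
    a₃ * b ^ 2 + b₃ * a ^ 2 - c₃ * a * b ≠ 0 := by
  intro hΔ
  apply hirr
  rcases eq_or_ne a 0 with rfl | ha
  · have ha₃ : a₃ = 0 := by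
      simpa [hab.resolve_left (not_not.2 rfl)] using hΔ
    exact ⟨c₃, by rw [ha₃]; ring⟩
  · -- `(c₃ a - 2 a₃ b)² = (c₃² - 4 a₃ b₃) a² + 4 a₃ Q(-b, a)`
    exact isSquare_of_mul_sq_eq_sq (v := c₃ * a - 2 * a₃ * b) ha
      (by linear_combination (-4 * a₃) * hΔ)

theorem not_dvd_or_not_dvd_of_gcd_gcd_eq_one {p : ℕ} (hp : p ≠ 1) {x y : ℤ}
    (h : Int.gcd (Int.gcd x y) p = 1) : ¬ (p : ℤ) ∣ x ∨ ¬ (p : ℤ) ∣ y := by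
  by_contra! hxy
  have hpg : p ∣ Int.gcd x y := Int.dvd_gcd hxy.1 hxy.2
  rw [Int.gcd_natCast_natCast, Nat.gcd_eq_right hpg] at h
  exact hp h

theorem stmt6 (a₁ b₁ a₂ b₂ a₃ b₃ c₃ : ℤ)
    (hprop : a₁ * b₂ - a₂ * b₁ ≠ 0)
    (hirr : ¬ IsSquare (c₃ ^ 2 - 4 * a₃ * b₃))
    (p : ℕ) (hp : p.Prime) (ν₁ ν₂ ν₃ : ℕ)
    (h : padicValInt p (a₁ * b₂ - a₂ * b₁) < min ν₁ ν₂ ∨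
         padicValInt p (a₃ * b₁ ^ 2 + b₃ * a₁ ^ 2 - c₃ * a₁ * b₁) < min ν₁ ν₃ ∨
         padicValInt p (a₃ * b₂ ^ 2 + b₃ * a₂ ^ 2 - c₃ * a₂ * b₂) < min ν₂ ν₃) :
    ¬ ∃ x : ℤ × ℤ, Int.gcd (Int.gcd x.1 x.2) p = 1 ∧
        (p : ℤ) ^ ν₁ ∣ a₁ * x.1 + b₁ * x.2 ∧
        (p : ℤ) ^ ν₂ ∣ a₂ * x.1 + b₂ * x.2 ∧
        (p : ℤ) ^ ν₃ ∣ a₃ * x.1 ^ 2 + b₃ * x.2 ^ 2 + c₃ * x.1 * x.2 := by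
  rintro ⟨⟨x, y⟩, hg, h₁, h₂, h₃⟩
  dsimp only at hg h₁ h₂ h₃
  have hpz : Prime (p : ℤ) := Nat.prime_iff_prime_int.1 hp
  have hxy := not_dvd_or_not_dvd_of_gcd_gcd_eq_one hp.ne_one hg
  have hxy₂ : ¬ (p : ℤ) ∣ x ^ 2 ∨ ¬ (p : ℤ) ∣ y ^ 2 :=
    hxy.imp (mt hpz.dvd_of_dvd_pow) (mt hpz.dvd_of_dvd_pow)
  have hL₁ : a₁ ≠ 0 ∨ b₁ ≠ 0 := by contrapose! hprop; simp [hprop]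
  have hL₂ : a₂ ≠ 0 ∨ b₂ ≠ 0 := by contrapose! hprop; simp [hprop]
  rcases h with h | h | h
  · exact h.not_ge <| min_le_padicValInt_of_mem_span hpz hprop hxy h₁ h₂
      (linear_resultant_mul_left_mem_span) (linear_resultant_mul_right_mem_span)
  · exact h.not_ge <| min_le_padicValInt_of_mem_span hpz (quadratic_resultant_ne_zero hL₁ hirr)
      hxy₂ h₁ h₃ (quadratic_resultant_mul_sq_left_mem_span)
      (quadratic_resultant_mul_sq_right_mem_span)
  · exact h.not_ge <| min_le_padicValInt_of_mem_span hpz (quadratic_resultant_ne_zero hL₂ hirr)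
      hxy₂ h₂ h₃ (quadratic_resultant_mul_sq_left_mem_span)
      (quadratic_resultant_mul_sq_right_mem_span)
end

section
/- Let L₁, L₂ be non-proportional primitive integral binary linear forms and Q a primitive integral binary quadratic form irreducible over ℚ. Define ρ*(d₁,d₂,d₃) as the number of x ∈ [0, d₁d₂d₃)² with d_i | L_i(x), d₃ | Q(x) and gcd(x₁,x₂,d₁d₂d₃) = 1. Then for any prime p and exponents with ν₃ ≤ max{ν₁,ν₂}, one has ρ*(p^{ν₁},p^{ν₂},p^{ν₃}) ≤ φ(p^{ν₁+ν₂+ν₃}) · p^{ν₃ + min{ν₁, ν₂, v_p(Δ₁₂)}}, where Δ₁₂ = Res(L₁,L₂). -/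
/-!
Only the linear conditions matter. If `v_p(Δ₁₂) < min ν₁ ν₂`, then `p ^ min ν₁ ν₂` divides
`Δ₁₂ x₁ = b₂ L₁(x) - b₁ L₂(x)` and `Δ₁₂ x₂ = a₁ L₂(x) - a₂ L₁(x)`, so `p ∣ x₁, x₂` and `ρ* = 0`.
Otherwise the claimed bound is `φ(p^s) p^(ν₃ + min ν₁ ν₂)` with `s = ν₁ + ν₂ + ν₃`, and it is enough
to count the `x ∈ [0, p^s)²` with `p ^ ν ∣ a x₁ + b x₂` for the form with the larger exponent
`ν = max ν₁ ν₂`. When `p ∤ a`, primitivity of `x` forces `p ∤ x₂`, and `x₁` is then determined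
modulo `p ^ ν`: there are at most `φ(p^s) p^(s - ν)` such points.
-/

/-- `ρ*(d₁,d₂,d₃)`: number of `x ∈ [0, d₁d₂d₃)²` with `dᵢ ∣ Lᵢ(x)`, `d₃ ∣ Q(x)` and
`gcd(x₁, x₂, d₁d₂d₃) = 1`, for `L₁ = a₁x₁+b₁x₂`, `L₂ = a₂x₁+b₂x₂`,
`Q = a₃x₁² + b₃x₂² + c₃x₁x₂`. -/
def rhoStar (a₁ b₁ a₂ b₂ a₃ b₃ c₃ : ℤ) (d₁ d₂ d₃ : ℕ) : ℕ :=
  ((Finset.range (d₁ * d₂ * d₃) ×ˢ Finset.range (d₁ * d₂ * d₃)).filter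
    (fun x => (d₁ : ℤ) ∣ a₁ * x.1 + b₁ * x.2 ∧ (d₂ : ℤ) ∣ a₂ * x.1 + b₂ * x.2 ∧
      (d₃ : ℤ) ∣ a₃ * x.1 ^ 2 + b₃ * x.2 ^ 2 + c₃ * x.1 * x.2 ∧
      Nat.gcd (Nat.gcd x.1 x.2) (d₁ * d₂ * d₃) = 1)).card

open Finset

def linearSolutions (a b : ℤ) (d N : ℕ) : Finset (ℕ × ℕ) :=
  (range N ×ˢ range N).filter
    (fun x => (d : ℤ) ∣ a * x.1 + b * x.2 ∧ Nat.gcd (Nat.gcd x.1 x.2) N = 1)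

lemma swap_mem_linearSolutions {a b : ℤ} {d N : ℕ} {x : ℕ × ℕ} :
    x.swap ∈ linearSolutions b a d N ↔ x ∈ linearSolutions a b d N := by
  simp only [linearSolutions, mem_filter, mem_product, Prod.fst_swap, Prod.snd_swap,
    add_comm (b * _), Nat.gcd_comm x.2]
  tauto

lemma card_linearSolutions_comm (a b : ℤ) (d N : ℕ) :
    #(linearSolutions b a d N) = #(linearSolutions a b d N) :=
  card_nbij' Prod.swap Prod.swap (fun _ hx => swap_mem_linearSolutions.mpr hx)
    (fun _ hx => swap_mem_linearSolutions.mp (by simpa using hx)) (fun _ _ => rfl) (fun _ _ => rfl)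

lemma not_dvd_snd_of_mem_linearSolutions {p : ℕ} (hp : p.Prime) {a b : ℤ}
    (ha : ¬ (p : ℤ) ∣ a) {ν s : ℕ} (hν : ν ≠ 0) (hs : s ≠ 0) {x : ℕ × ℕ}
    (hx : x ∈ linearSolutions a b (p ^ ν) (p ^ s)) : ¬ p ∣ x.2 := by
  rw [linearSolutions, mem_filter] at hx
  obtain ⟨-, hL, hcop⟩ := hx
  intro hp₂
  have hpL : (p : ℤ) ∣ a * x.1 + b * x.2 :=
    (Int.natCast_dvd_natCast.mpr (dvd_pow_self p hν)).trans hL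
  have hpa₁ : (p : ℤ) ∣ a * x.1 :=
    (dvd_add_left ((Int.natCast_dvd_natCast.mpr hp₂).mul_left b)).mp hpL
  have hp₁ : p ∣ x.1 := Int.natCast_dvd_natCast.mp
    (((Nat.prime_iff_prime_int.mp hp).dvd_mul.mp hpa₁).resolve_left ha)
  exact hp.ne_one (Nat.eq_one_of_dvd_coprimes hcop (Nat.dvd_gcd hp₁ hp₂) (dvd_pow_self p hs))

lemma card_linearSolutions_le_of_not_dvd {p : ℕ} (hp : p.Prime) {a : ℤ} (b : ℤ)
    (ha : ¬ (p : ℤ) ∣ a) {ν s : ℕ} (hν : ν ≠ 0) (hνs : ν ≤ s) :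
    #(linearSolutions a b (p ^ ν) (p ^ s)) ≤ Nat.totient (p ^ s) * p ^ (s - ν) := by
  have hcop : IsCoprime ((p : ℤ) ^ ν) a :=
    ((Nat.prime_iff_prime_int.mp hp).coprime_iff_not_dvd.mpr ha).pow_left
  rw [Nat.totient, ← card_range (p ^ (s - ν)), ← card_product]
  -- `x₁` is fixed mod `p ^ ν` by `x₂`, so `x ↦ (x₂, x₁ / p ^ ν)` is injective.
  refine card_le_card_of_injOn (fun x => (x.2, x.1 / p ^ ν)) (fun x hx => ?_) ?_
  · have hx₂ := not_dvd_snd_of_mem_linearSolutions hp ha hν (by omega) hx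
    simp only [linearSolutions, mem_coe, mem_filter, mem_product, mem_range] at hx ⊢
    refine ⟨⟨hx.1.2, ((Nat.Prime.coprime_iff_not_dvd hp).mpr hx₂).pow_left s⟩, ?_⟩
    rw [Nat.div_lt_iff_lt_mul (pow_pos hp.pos ν), ← pow_add, Nat.sub_add_cancel hνs]
    exact hx.1.1
  · intro x hx y hy hxy
    simp only [Prod.mk.injEq] at hxy
    simp only [linearSolutions, mem_coe, mem_filter] at hx hy
    have hdiff : ((p : ℤ) ^ ν) ∣ a * ((x.1 : ℤ) - y.1) := by
      rw [mul_sub, ← add_sub_add_right_eq_sub _ _ (b * (y.2 : ℤ))]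
      rw [← hxy.1] at hy ⊢
      exact dvd_sub hx.2.1 hy.2.1
    refine Prod.ext (Nat.ext_div_modEq hxy.2 ?_) hxy.1
    rw [Nat.ModEq.comm, Nat.modEq_iff_dvd]
    exact_mod_cast hcop.dvd_of_dvd_mul_left hdiff

lemma card_linearSolutions_le {p : ℕ} (hp : p.Prime) {a b : ℤ} (hab : Int.gcd a b = 1)
    {ν s : ℕ} (hν : ν ≠ 0) (hνs : ν ≤ s) :
    #(linearSolutions a b (p ^ ν) (p ^ s)) ≤ Nat.totient (p ^ s) * p ^ (s - ν) := by
  have hpZ : Prime (p : ℤ) := Nat.prime_iff_prime_int.mp hp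
  by_cases ha : (p : ℤ) ∣ a
  · have hb : ¬ (p : ℤ) ∣ b := fun hb =>
      hpZ.not_isUnit ((Int.isCoprime_iff_gcd_eq_one.mpr hab).isUnit_of_dvd' ha hb)
    rw [← card_linearSolutions_comm]
    exact card_linearSolutions_le_of_not_dvd hp a hb hν hνs
  · exact card_linearSolutions_le_of_not_dvd hp b ha hν hνs

section

variable (a₁ b₁ a₂ b₂ a₃ b₃ c₃ : ℤ) (d₁ d₂ d₃ : ℕ)

lemma rhoStar_le_card_linearSolutions_left :
    rhoStar a₁ b₁ a₂ b₂ a₃ b₃ c₃ d₁ d₂ d₃ ≤ #(linearSolutions a₁ b₁ d₁ (d₁ * d₂ * d₃)) :=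
  card_le_card (monotone_filter_right _ fun _ _ h => ⟨h.1, h.2.2.2⟩)

lemma rhoStar_le_card_linearSolutions_right :
    rhoStar a₁ b₁ a₂ b₂ a₃ b₃ c₃ d₁ d₂ d₃ ≤ #(linearSolutions a₂ b₂ d₂ (d₁ * d₂ * d₃)) :=
  card_le_card (monotone_filter_right _ fun _ _ h => ⟨h.2.1, h.2.2.2⟩)

end

lemma rhoStar_le_totient_mul_pow {p : ℕ} (hp : p.Prime) {a₁ b₁ a₂ b₂ : ℤ}
    (h₁ : Int.gcd a₁ b₁ = 1) (h₂ : Int.gcd a₂ b₂ = 1) (a₃ b₃ c₃ : ℤ) {ν₁ ν₂ ν₃ : ℕ}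
    (hν : ν₃ ≤ max ν₁ ν₂) :
    rhoStar a₁ b₁ a₂ b₂ a₃ b₃ c₃ (p ^ ν₁) (p ^ ν₂) (p ^ ν₃) ≤
      Nat.totient (p ^ (ν₁ + ν₂ + ν₃)) * p ^ (ν₃ + min ν₁ ν₂) := by
  by_cases h0 : max ν₁ ν₂ = 0
  · obtain ⟨rfl, rfl, rfl⟩ : ν₁ = 0 ∧ ν₂ = 0 ∧ ν₃ = 0 := by omega
    exact (card_filter_le _ _).trans (by simp)
  have hprod : p ^ ν₁ * p ^ ν₂ * p ^ ν₃ = p ^ (ν₁ + ν₂ + ν₃) := by rw [pow_add, pow_add]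
  rcases le_total ν₂ ν₁ with h | h
  · calc _ ≤ #(linearSolutions a₁ b₁ (p ^ ν₁) (p ^ (ν₁ + ν₂ + ν₃))) :=
          hprod ▸ rhoStar_le_card_linearSolutions_left ..
      _ ≤ _ := card_linearSolutions_le hp h₁ (by omega) (by omega)
      _ = _ := by congr 2; omega
  · calc _ ≤ #(linearSolutions a₂ b₂ (p ^ ν₂) (p ^ (ν₁ + ν₂ + ν₃))) :=
          hprod ▸ rhoStar_le_card_linearSolutions_right ..
      _ ≤ _ := card_linearSolutions_le hp h₂ (by omega) (by omega)
      _ = _ := by congr 2; omega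

lemma det_mul_dvd_of_dvd_of_dvd {d a₁ b₁ a₂ b₂ x y : ℤ} (h₁ : d ∣ a₁ * x + b₁ * y)
    (h₂ : d ∣ a₂ * x + b₂ * y) :
    d ∣ (a₁ * b₂ - a₂ * b₁) * x ∧ d ∣ (a₁ * b₂ - a₂ * b₁) * y := by
  constructor
  · rw [show (a₁ * b₂ - a₂ * b₁) * x = b₂ * (a₁ * x + b₁ * y) - b₁ * (a₂ * x + b₂ * y) by ring]
    exact dvd_sub (h₁.mul_left _) (h₂.mul_left _)
  · rw [show (a₁ * b₂ - a₂ * b₁) * y = a₁ * (a₂ * x + b₂ * y) - a₂ * (a₁ * x + b₁ * y) by ring]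
    exact dvd_sub (h₂.mul_left _) (h₁.mul_left _)

lemma Int.dvd_of_pow_dvd_mul_of_padicValInt_lt {p : ℕ} [Fact p.Prime] {Δ n : ℤ} {m : ℕ}
    (hΔ : Δ ≠ 0) (hm : padicValInt p Δ < m) (h : (p : ℤ) ^ m ∣ Δ * n) : (p : ℤ) ∣ n := by
  by_contra hn
  have hn0 : n ≠ 0 := by rintro rfl; exact hn (dvd_zero _)
  have hval := ((padicValInt_dvd_iff m _).mp h).resolve_left (mul_ne_zero hΔ hn0)
  rw [padicValInt.mul hΔ hn0, padicValInt.eq_zero_of_not_dvd hn] at hval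
  omega

lemma rhoStar_eq_zero_of_padicValInt_lt {p : ℕ} (hp : p.Prime) {a₁ b₁ a₂ b₂ : ℤ}
    (hΔ : a₁ * b₂ - a₂ * b₁ ≠ 0) (a₃ b₃ c₃ : ℤ) {ν₁ ν₂ ν₃ : ℕ}
    (hδ : padicValInt p (a₁ * b₂ - a₂ * b₁) < min ν₁ ν₂) :
    rhoStar a₁ b₁ a₂ b₂ a₃ b₃ c₃ (p ^ ν₁) (p ^ ν₂) (p ^ ν₃) = 0 := by
  have : Fact p.Prime := ⟨hp⟩
  rw [rhoStar, card_eq_zero, filter_eq_empty_iff]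
  rintro x - ⟨hL₁, hL₂, -, hcop⟩
  have hm₁ : (p : ℤ) ^ min ν₁ ν₂ ∣ a₁ * x.1 + b₁ * x.2 :=
    (pow_dvd_pow _ (min_le_left _ _)).trans (by exact_mod_cast hL₁)
  have hm₂ : (p : ℤ) ^ min ν₁ ν₂ ∣ a₂ * x.1 + b₂ * x.2 :=
    (pow_dvd_pow _ (min_le_right _ _)).trans (by exact_mod_cast hL₂)
  obtain ⟨hx₁, hx₂⟩ := det_mul_dvd_of_dvd_of_dvd hm₁ hm₂
  have hp₁ := Int.natCast_dvd_natCast.mp (Int.dvd_of_pow_dvd_mul_of_padicValInt_lt hΔ hδ hx₁)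
  have hp₂ := Int.natCast_dvd_natCast.mp (Int.dvd_of_pow_dvd_mul_of_padicValInt_lt hΔ hδ hx₂)
  have hpN : p ∣ p ^ ν₁ * p ^ ν₂ * p ^ ν₃ :=
    ((dvd_pow_self p (by omega)).mul_right _).mul_right _
  exact hp.ne_one (Nat.eq_one_of_dvd_coprimes hcop (Nat.dvd_gcd hp₁ hp₂) hpN)

theorem stmt7_general (a₁ b₁ a₂ b₂ a₃ b₃ c₃ : ℤ)
    (h1prim : Int.gcd a₁ b₁ = 1) (h2prim : Int.gcd a₂ b₂ = 1)
    (hprop : a₁ * b₂ - a₂ * b₁ ≠ 0)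
    (p : ℕ) (hp : p.Prime) (ν₁ ν₂ ν₃ : ℕ) (hν : ν₃ ≤ max ν₁ ν₂) :
    rhoStar a₁ b₁ a₂ b₂ a₃ b₃ c₃ (p ^ ν₁) (p ^ ν₂) (p ^ ν₃) ≤
      Nat.totient (p ^ (ν₁ + ν₂ + ν₃)) *
        p ^ (ν₃ + min (min ν₁ ν₂) (padicValInt p (a₁ * b₂ - a₂ * b₁))) := by
  rcases lt_or_ge (padicValInt p (a₁ * b₂ - a₂ * b₁)) (min ν₁ ν₂) with hδ | hδ
  · rw [rhoStar_eq_zero_of_padicValInt_lt hp hprop a₃ b₃ c₃ hδ]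
    exact Nat.zero_le _
  · rw [min_eq_left hδ]
    exact rhoStar_le_totient_mul_pow hp h1prim h2prim a₃ b₃ c₃ hν

theorem stmt7 (a₁ b₁ a₂ b₂ a₃ b₃ c₃ : ℤ)
    (h1prim : Int.gcd a₁ b₁ = 1) (h2prim : Int.gcd a₂ b₂ = 1)
    (hprop : a₁ * b₂ - a₂ * b₁ ≠ 0)
    (hQprim : Int.gcd (Int.gcd a₃ b₃) c₃ = 1)
    (hirr : ¬ IsSquare (c₃ ^ 2 - 4 * a₃ * b₃))
    (p : ℕ) (hp : p.Prime) (ν₁ ν₂ ν₃ : ℕ) (hν : ν₃ ≤ max ν₁ ν₂) :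
    rhoStar a₁ b₁ a₂ b₂ a₃ b₃ c₃ (p ^ ν₁) (p ^ ν₂) (p ^ ν₃) ≤
      Nat.totient (p ^ (ν₁ + ν₂ + ν₃)) *
        p ^ (ν₃ + min (min ν₁ ν₂) (padicValInt p (a₁ * b₂ - a₂ * b₁))) :=
  stmt7_general a₁ b₁ a₂ b₂ a₃ b₃ c₃ h1prim h2prim hprop p hp ν₁ ν₂ ν₃ hν
end

section
/- Let L₁, L₂ be primitive non-proportional integral linear forms and Q a primitive quadratic form irreducible over ℚ, and define ρ(d₁,d₂,d₃) = #{x ∈ [0,d₁d₂d₃)² : d_i | L_i(x), d₃ | Q(x)} and ρ* as the analogous count with the extra condition gcd(x₁,x₂,d₁d₂d₃)=1. Then for every prime p, ρ(p^{ν₁},p^{ν₂},p^{ν₃}) = Σ_{0 ≤ k ≤ max{ν₁,ν₂,⌈ν₃/2⌉}} ρ*(p^{max{ν₁−k,0}}, p^{max{ν₂−k,0}}, p^{max{ν₃−2k,0}}) · p^{m_k}, where m_k = 2(min{ν₁,k} + min{ν₂,k} + min{ν₃,2k} − k). -/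
/-!
Stratify the solutions `x` modulo `p^(ν₁+ν₂+ν₃)` by `k = v_p(gcd(x₁, x₂))`, capped at
`K = max(ν₁, ν₂, ⌈ν₃/2⌉)`: the top stratum also holds `x = 0` and every `x` with a larger
valuation, for all of which the congruences hold trivially. Writing `x = p^k y`, homogeneity of
the linear forms (degree 1) and of `Q` (degree 2) turns the congruences modulo `p^νᵢ` into
congruences modulo `p^(ν₁-k)`, `p^(ν₂-k)`, `p^(ν₃-2k)` for `y`, together with `p ∤ gcd(y₁, y₂)`
unless `k = K`. These conditions are periodic modulo `D = p^(ν₁-k) p^(ν₂-k) p^(ν₃-2k)`, and `y`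
ranges over a box of side `D p^(m_k)`, so the stratum contributes `ρ*(…) · p^(2 m_k)`.
-/

/-- `ρ(d₁,d₂,d₃)`: number of `x ∈ [0, d₁d₂d₃)²` with `dᵢ ∣ Lᵢ(x)` and `d₃ ∣ Q(x)`. -/
def rho (a₁ b₁ a₂ b₂ a₃ b₃ c₃ : ℤ) (d₁ d₂ d₃ : ℕ) : ℕ :=
  ((Finset.range (d₁ * d₂ * d₃) ×ˢ Finset.range (d₁ * d₂ * d₃)).filter
    (fun x => (d₁ : ℤ) ∣ a₁ * x.1 + b₁ * x.2 ∧ (d₂ : ℤ) ∣ a₂ * x.1 + b₂ * x.2 ∧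
      (d₃ : ℤ) ∣ a₃ * x.1 ^ 2 + b₃ * x.2 ^ 2 + c₃ * x.1 * x.2)).card

open Finset

theorem card_filter_dvd_box_mul {t : ℕ} (ht : 0 < t) (R : ℕ) (P : ℕ × ℕ → Prop)
    [DecidablePred P] :
    #{z ∈ range (t * R) ×ˢ range (t * R) | t ∣ z.1 ∧ t ∣ z.2 ∧ P (z.1 / t, z.2 / t)} =
      #{y ∈ range R ×ˢ range R | P y} := by
  refine card_nbij' (fun z => (z.1 / t, z.2 / t)) (fun y => (t * y.1, t * y.2)) ?_ ?_ ?_ ?_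
  · rintro ⟨z₁, z₂⟩ hz
    simp only [coe_filter, mem_product, mem_range, Set.mem_ofPred_eq] at hz ⊢
    exact ⟨⟨Nat.div_lt_of_lt_mul hz.1.1, Nat.div_lt_of_lt_mul hz.1.2⟩, hz.2.2.2⟩
  · rintro ⟨y₁, y₂⟩ hy
    simp only [coe_filter, mem_product, mem_range, Set.mem_ofPred_eq] at hy ⊢
    simp [Nat.mul_div_cancel_left _ ht, ht, hy]
  · rintro ⟨z₁, z₂⟩ hz
    simp only [coe_filter, Set.mem_ofPred_eq] at hz
    simp [Nat.mul_div_cancel' hz.2.1, Nat.mul_div_cancel' hz.2.2.1]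
  · rintro ⟨y₁, y₂⟩ -
    simp [Nat.mul_div_cancel_left _ ht]

theorem card_filter_box_mul_of_periodic {M : ℕ} (hM : 0 < M) (q : ℕ) (P : ℕ × ℕ → Prop)
    [DecidablePred P] (hP : ∀ z : ℕ × ℕ, P (z.1 % M, z.2 % M) ↔ P z) :
    #{z ∈ range (M * q) ×ˢ range (M * q) | P z} = #{z ∈ range M ×ˢ range M | P z} * q ^ 2 := by
  have hprod : #{z ∈ range M ×ˢ range M | P z} * q ^ 2 =
      #({z ∈ range M ×ˢ range M | P z} ×ˢ (range q ×ˢ range q)) := by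
    simp only [card_product, card_range]; ring
  have hlt : ∀ {a u : ℕ}, a < M → u < q → a + M * u < M * q := fun ha hu => by nlinarith
  rw [hprod]
  refine card_nbij' (fun z => ((z.1 % M, z.2 % M), (z.1 / M, z.2 / M)))
    (fun w => (w.1.1 + M * w.2.1, w.1.2 + M * w.2.2)) ?_ ?_ ?_ ?_
  · rintro ⟨z₁, z₂⟩ hz
    simp only [coe_filter, coe_product, mem_product, mem_range, Set.mem_prod,
      Set.mem_ofPred_eq, mem_coe] at hz ⊢
    exact ⟨⟨⟨Nat.mod_lt _ hM, Nat.mod_lt _ hM⟩, (hP _).mpr hz.2⟩,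
      Nat.div_lt_of_lt_mul hz.1.1, Nat.div_lt_of_lt_mul hz.1.2⟩
  · rintro ⟨⟨a₁, a₂⟩, ⟨u₁, u₂⟩⟩ hw
    simp only [coe_filter, coe_product, mem_product, mem_range, Set.mem_prod,
      Set.mem_ofPred_eq, mem_coe] at hw ⊢
    obtain ⟨⟨⟨ha₁, ha₂⟩, hPa⟩, hu₁, hu₂⟩ := hw
    refine ⟨⟨hlt ha₁ hu₁, hlt ha₂ hu₂⟩, (hP _).mp ?_⟩
    simpa [Nat.add_mul_mod_self_left, Nat.mod_eq_of_lt ha₁, Nat.mod_eq_of_lt ha₂] using hPa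
  · rintro ⟨z₁, z₂⟩ -
    simp [Nat.mod_add_div]
  · rintro ⟨⟨a₁, a₂⟩, ⟨u₁, u₂⟩⟩ hw
    simp only [coe_filter, coe_product, mem_product, mem_range, Set.mem_prod,
      Set.mem_ofPred_eq, mem_coe] at hw
    obtain ⟨⟨⟨ha₁, ha₂⟩, -⟩, -, -⟩ := hw
    simp [Nat.add_mul_mod_self_left, Nat.mod_eq_of_lt, Nat.add_mul_div_left _ _ hM,
      Nat.div_eq_of_lt, ha₁, ha₂]

theorem pow_dvd_pow_mul_iff {M : Type*} [CommMonoidWithZero M] [IsCancelMulZero M] {t : M}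
    (ht : t ≠ 0) (ν k : ℕ) (s : M) : t ^ ν ∣ t ^ k * s ↔ t ^ (ν - k) ∣ s := by
  rcases le_or_gt ν k with hνk | hkν
  · simp only [Nat.sub_eq_zero_of_le hνk, pow_zero, one_dvd, iff_true]
    exact (pow_dvd_pow t hνk).mul_right s
  · rw [← Nat.add_sub_of_le hkν.le, pow_add, Nat.add_sub_cancel_left,
      mul_dvd_mul_iff_left (pow_ne_zero k ht)]

theorem Nat.gcd_mod_of_dvd {D M : ℕ} (hD : D ∣ M) (a : ℕ) :
    Nat.gcd (a % M) D = Nat.gcd a D := by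
  rw [Nat.gcd_comm, Nat.gcd_rec, Nat.mod_mod_of_dvd _ hD, ← Nat.gcd_rec, Nat.gcd_comm]

theorem Nat.coprime_gcd_mod_mod_iff {D M : ℕ} (hD : D ∣ M) (a b : ℕ) :
    Nat.Coprime (Nat.gcd (a % M) (b % M)) D ↔ Nat.Coprime (Nat.gcd a b) D := by
  rw [Nat.Coprime, Nat.Coprime, Nat.gcd_assoc, Nat.gcd_assoc, Nat.gcd_mod_of_dvd hD,
    Nat.gcd_mod_of_dvd ((Nat.gcd_dvd_right b D).trans hD)]

theorem Nat.Prime.coprime_pow_right_iff {p : ℕ} (hp : p.Prime) (g E : ℕ) :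
    Nat.Coprime g (p ^ E) ↔ E = 0 ∨ ¬ p ∣ g := by
  rcases E with _ | E
  · simp
  · rw [Nat.coprime_pow_right_iff E.succ_pos, Nat.coprime_comm, hp.coprime_iff_not_dvd]
    simp

theorem Nat.findGreatest_pow_dvd_mul_eq_iff {p : ℕ} (hp : p ≠ 0) {k K : ℕ} (hk : k ≤ K)
    (g : ℕ) : Nat.findGreatest (fun j => p ^ j ∣ p ^ k * g) K = k ↔ (k < K → ¬ p ∣ g) := by
  have hsucc : p ^ (k + 1) ∣ p ^ k * g ↔ p ∣ g := by
    rw [pow_succ, Nat.mul_dvd_mul_iff_left (Nat.pos_of_ne_zero (pow_ne_zero k hp))]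
  rw [Nat.findGreatest_eq_iff]
  constructor
  · rintro ⟨-, -, hmax⟩ hkK hdvd
    exact hmax k.lt_succ_self hkK (hsucc.mpr hdvd)
  · intro h
    exact ⟨hk, fun _ => dvd_mul_right _ _,
      fun n hkn hnK hdvd => h (hkn.trans_le hnK) (hsucc.mp ((pow_dvd_pow p hkn).trans hdvd))⟩

section LocalSolutions

variable (a₁ b₁ a₂ b₂ a₃ b₃ c₃ : ℤ)

def IsLocalSol (d₁ d₂ d₃ : ℕ) (x : ℕ × ℕ) : Prop :=
  (d₁ : ℤ) ∣ a₁ * x.1 + b₁ * x.2 ∧ (d₂ : ℤ) ∣ a₂ * x.1 + b₂ * x.2 ∧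
    (d₃ : ℤ) ∣ a₃ * x.1 ^ 2 + b₃ * x.2 ^ 2 + c₃ * x.1 * x.2

instance (d₁ d₂ d₃ : ℕ) : DecidablePred (IsLocalSol a₁ b₁ a₂ b₂ a₃ b₃ c₃ d₁ d₂ d₃) :=
  fun _ => inferInstanceAs (Decidable (_ ∧ _ ∧ _))

variable {a₁ b₁ a₂ b₂ a₃ b₃ c₃}

theorem rho_eq_card (d₁ d₂ d₃ : ℕ) :
    rho a₁ b₁ a₂ b₂ a₃ b₃ c₃ d₁ d₂ d₃ =
      #{x ∈ range (d₁ * d₂ * d₃) ×ˢ range (d₁ * d₂ * d₃) |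
        IsLocalSol a₁ b₁ a₂ b₂ a₃ b₃ c₃ d₁ d₂ d₃ x} :=
  rfl

theorem rhoStar_eq_card (d₁ d₂ d₃ : ℕ) :
    rhoStar a₁ b₁ a₂ b₂ a₃ b₃ c₃ d₁ d₂ d₃ =
      #{x ∈ range (d₁ * d₂ * d₃) ×ˢ range (d₁ * d₂ * d₃) |
        IsLocalSol a₁ b₁ a₂ b₂ a₃ b₃ c₃ d₁ d₂ d₃ x ∧
          Nat.Coprime (Nat.gcd x.1 x.2) (d₁ * d₂ * d₃)} :=
  congrArg card (filter_congr fun _ _ => by simp only [IsLocalSol, Nat.Coprime, and_assoc])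

theorem isLocalSol_pow_mul_iff {p : ℕ} (hp : p ≠ 0) (ν₁ ν₂ ν₃ k y₁ y₂ : ℕ) :
    IsLocalSol a₁ b₁ a₂ b₂ a₃ b₃ c₃ (p ^ ν₁) (p ^ ν₂) (p ^ ν₃) (p ^ k * y₁, p ^ k * y₂) ↔
      IsLocalSol a₁ b₁ a₂ b₂ a₃ b₃ c₃ (p ^ (ν₁ - k)) (p ^ (ν₂ - k)) (p ^ (ν₃ - 2 * k))
        (y₁, y₂) := by
  have hp' : (p : ℤ) ≠ 0 := by exact_mod_cast hp
  simp only [IsLocalSol, Nat.cast_pow, Nat.cast_mul]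
  refine and_congr ?_ (and_congr ?_ ?_)
  · rw [← pow_dvd_pow_mul_iff hp' ν₁ k]; congr! 1; ring
  · rw [← pow_dvd_pow_mul_iff hp' ν₂ k]; congr! 1; ring
  · rw [← pow_dvd_pow_mul_iff hp' ν₃ (2 * k)]; congr! 1; ring

theorem isLocalSol_mod_iff {d₁ d₂ d₃ M : ℕ} (h₁ : d₁ ∣ M) (h₂ : d₂ ∣ M) (h₃ : d₃ ∣ M)
    (x : ℕ × ℕ) :
    IsLocalSol a₁ b₁ a₂ b₂ a₃ b₃ c₃ d₁ d₂ d₃ (x.1 % M, x.2 % M) ↔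
      IsLocalSol a₁ b₁ a₂ b₂ a₃ b₃ c₃ d₁ d₂ d₃ x := by
  have hmod : ∀ {d : ℕ}, d ∣ M → ∀ n : ℕ, ((n % M : ℕ) : ℤ) ≡ n [ZMOD d] := fun hd n =>
    (Int.natCast_modEq_iff.mpr (Nat.mod_modEq n M)).of_dvd (Int.natCast_dvd_natCast.mpr hd)
  refine and_congr (Int.ModEq.dvd_iff ?_)
    (and_congr (Int.ModEq.dvd_iff ?_) (Int.ModEq.dvd_iff ?_))
  · exact ((hmod h₁ _).mul_left _).add ((hmod h₁ _).mul_left _)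
  · exact ((hmod h₂ _).mul_left _).add ((hmod h₂ _).mul_left _)
  · exact ((((hmod h₃ _).pow 2).mul_left _).add (((hmod h₃ _).pow 2).mul_left _)).add
      (((hmod h₃ _).mul_left _).mul (hmod h₃ _))

theorem isLocalSol_pow_mul_and_findGreatest_eq_iff {p ν₁ ν₂ ν₃ k : ℕ} (hp : p.Prime)
    (hk : k ≤ max (max ν₁ ν₂) ((ν₃ + 1) / 2)) (y₁ y₂ : ℕ) :
    (IsLocalSol a₁ b₁ a₂ b₂ a₃ b₃ c₃ (p ^ ν₁) (p ^ ν₂) (p ^ ν₃) (p ^ k * y₁, p ^ k * y₂) ∧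
        Nat.findGreatest (fun j => p ^ j ∣ Nat.gcd (p ^ k * y₁) (p ^ k * y₂))
          (max (max ν₁ ν₂) ((ν₃ + 1) / 2)) = k) ↔
      IsLocalSol a₁ b₁ a₂ b₂ a₃ b₃ c₃ (p ^ (ν₁ - k)) (p ^ (ν₂ - k)) (p ^ (ν₃ - 2 * k)) (y₁, y₂) ∧
        Nat.Coprime (Nat.gcd y₁ y₂) (p ^ (ν₁ - k) * p ^ (ν₂ - k) * p ^ (ν₃ - 2 * k)) := by
  rw [isLocalSol_pow_mul_iff hp.ne_zero, Nat.gcd_mul_left,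
    Nat.findGreatest_pow_dvd_mul_eq_iff hp.ne_zero hk, ← pow_add, ← pow_add,
    hp.coprime_pow_right_iff]
  have hE : ν₁ - k + (ν₂ - k) + (ν₃ - 2 * k) = 0 ↔ ¬ k < max (max ν₁ ν₂) ((ν₃ + 1) / 2) := by
    omega
  rw [hE, ← imp_iff_not_or]

theorem card_isLocalSol_findGreatest_eq {p ν₁ ν₂ ν₃ k : ℕ} (hp : p.Prime)
    (hk : k ≤ max (max ν₁ ν₂) ((ν₃ + 1) / 2)) :
    #{x ∈ range (p ^ ν₁ * p ^ ν₂ * p ^ ν₃) ×ˢ range (p ^ ν₁ * p ^ ν₂ * p ^ ν₃) |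
        IsLocalSol a₁ b₁ a₂ b₂ a₃ b₃ c₃ (p ^ ν₁) (p ^ ν₂) (p ^ ν₃) x ∧
          Nat.findGreatest (fun j => p ^ j ∣ Nat.gcd x.1 x.2)
            (max (max ν₁ ν₂) ((ν₃ + 1) / 2)) = k} =
      rhoStar a₁ b₁ a₂ b₂ a₃ b₃ c₃ (p ^ (ν₁ - k)) (p ^ (ν₂ - k)) (p ^ (ν₃ - 2 * k)) *
        p ^ (2 * (min ν₁ k + min ν₂ k + min ν₃ (2 * k) - k)) := by
  set K := max (max ν₁ ν₂) ((ν₃ + 1) / 2)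
  set D := p ^ (ν₁ - k) * p ^ (ν₂ - k) * p ^ (ν₃ - 2 * k) with hD
  set m := min ν₁ k + min ν₂ k + min ν₃ (2 * k) - k
  have hpk : 0 < p ^ k := pow_pos hp.pos k
  have hbox : p ^ ν₁ * p ^ ν₂ * p ^ ν₃ = p ^ k * (D * p ^ m) := by
    simp only [hD, ← pow_add]; congr 1; omega
  have hDpow : D = p ^ ((ν₁ - k) + (ν₂ - k) + (ν₃ - 2 * k)) := by simp only [hD, pow_add]
  have hD0 : 0 < D := hDpow ▸ pow_pos hp.pos _
  have hper : ∀ y : ℕ × ℕ,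
      (IsLocalSol a₁ b₁ a₂ b₂ a₃ b₃ c₃ (p ^ (ν₁ - k)) (p ^ (ν₂ - k)) (p ^ (ν₃ - 2 * k))
          (y.1 % D, y.2 % D) ∧ Nat.Coprime (Nat.gcd (y.1 % D) (y.2 % D)) D) ↔
        (IsLocalSol a₁ b₁ a₂ b₂ a₃ b₃ c₃ (p ^ (ν₁ - k)) (p ^ (ν₂ - k)) (p ^ (ν₃ - 2 * k)) y ∧
          Nat.Coprime (Nat.gcd y.1 y.2) D) := fun y =>
    and_congr (isLocalSol_mod_iff ((dvd_mul_right _ _).mul_right _)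
      ((dvd_mul_left _ _).mul_right _) (dvd_mul_left _ _) y)
      (Nat.coprime_gcd_mod_mod_iff dvd_rfl _ _)
  rw [rhoStar_eq_card, mul_comm 2 m, pow_mul, hbox,
    ← card_filter_box_mul_of_periodic hD0 _ _ hper, ← card_filter_dvd_box_mul hpk (D * p ^ m)]
  refine congrArg card (filter_congr fun x _ => ?_)
  by_cases hdvd : p ^ k ∣ x.1 ∧ p ^ k ∣ x.2
  · obtain ⟨⟨y₁, hx₁⟩, ⟨y₂, hx₂⟩⟩ := hdvd
    obtain ⟨x₁, x₂⟩ := x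
    subst hx₁ hx₂
    simp only [Nat.mul_div_cancel_left _ hpk, dvd_mul_right, true_and]
    exact isLocalSol_pow_mul_and_findGreatest_eq_iff hp hk y₁ y₂
  · have hval : Nat.findGreatest (fun j => p ^ j ∣ Nat.gcd x.1 x.2) K ≠ k := fun hval =>
      have hgcd := hval ▸ Nat.findGreatest_spec (Nat.zero_le K) (by simp)
      hdvd ⟨hgcd.trans (Nat.gcd_dvd_left _ _), hgcd.trans (Nat.gcd_dvd_right _ _)⟩
    exact iff_of_false (fun h => hval h.2) fun h => hdvd ⟨h.1, h.2.1⟩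

end LocalSolutions

theorem stmt8_general (a₁ b₁ a₂ b₂ a₃ b₃ c₃ : ℤ)
    (p : ℕ) (hp : p.Prime) (ν₁ ν₂ ν₃ : ℕ) :
    rho a₁ b₁ a₂ b₂ a₃ b₃ c₃ (p ^ ν₁) (p ^ ν₂) (p ^ ν₃) =
      ∑ k ∈ Finset.range (max (max ν₁ ν₂) ((ν₃ + 1) / 2) + 1),
        rhoStar a₁ b₁ a₂ b₂ a₃ b₃ c₃ (p ^ (ν₁ - k)) (p ^ (ν₂ - k)) (p ^ (ν₃ - 2 * k)) *
          p ^ (2 * (min ν₁ k + min ν₂ k + min ν₃ (2 * k) - k)) := by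
  rw [rho_eq_card, card_eq_sum_card_fiberwise (t := range (max (max ν₁ ν₂) ((ν₃ + 1) / 2) + 1))
    (f := fun x => Nat.findGreatest (fun j => p ^ j ∣ Nat.gcd x.1 x.2) _)
    fun _ _ => mem_range.mpr (Nat.lt_succ_of_le (Nat.findGreatest_le _))]
  refine sum_congr rfl fun k hk => ?_
  rw [filter_filter]
  exact card_isLocalSol_findGreatest_eq hp (Nat.lt_succ_iff.mp (mem_range.mp hk))

theorem stmt8 (a₁ b₁ a₂ b₂ a₃ b₃ c₃ : ℤ)
    (h1prim : Int.gcd a₁ b₁ = 1) (h2prim : Int.gcd a₂ b₂ = 1)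
    (hprop : a₁ * b₂ - a₂ * b₁ ≠ 0)
    (hQprim : Int.gcd (Int.gcd a₃ b₃) c₃ = 1)
    (hirr : ¬ IsSquare (c₃ ^ 2 - 4 * a₃ * b₃))
    (p : ℕ) (hp : p.Prime) (ν₁ ν₂ ν₃ : ℕ) :
    rho a₁ b₁ a₂ b₂ a₃ b₃ c₃ (p ^ ν₁) (p ^ ν₂) (p ^ ν₃) =
      ∑ k ∈ Finset.range (max (max ν₁ ν₂) ((ν₃ + 1) / 2) + 1),
        rhoStar a₁ b₁ a₂ b₂ a₃ b₃ c₃ (p ^ (ν₁ - k)) (p ^ (ν₂ - k)) (p ^ (ν₃ - 2 * k)) *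
          p ^ (2 * (min ν₁ k + min ν₂ k + min ν₃ (2 * k) - k)) :=
  stmt8_general a₁ b₁ a₂ b₂ a₃ b₃ c₃ p hp ν₁ ν₂ ν₃
end

section
/- Let Q be a primitive integral binary quadratic form irreducible over ℚ, p ∤ 2·disc(Q) a prime, ν ≥ 0. Then ρ(1,1,p^ν) = φ(p^ν)·(1 + (disc(Q)/p))·⌈ν/2⌉ + p^{2(ν − ⌈ν/2⌉)}, and in particular ρ(1,1,p^ν) ≤ (ν+1)p^ν, where ρ(1,1,p^ν) = #{x ∈ [0,p^ν)² : p^ν | Q(x)}. -/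
/-!
Split the zeros of `Q` in `(ℤ/p^ν)²` into primitive ones (some coordinate a unit) and the rest.
A swap or a shear of the variables lets us assume `p ∤ a`. If `D = c² - 4ab` is a non-square
mod `p`, then `Q` is anisotropic mod `p` and there are no primitive zeros. If `D` is a square
mod `p`, Hensel's lemma gives `δ` with `δ² = D` mod `p^ν`, and `4a·Q` is the product of the
linear forms `2ax + (c ∓ δ)y`; a primitive zero lies on exactly one of these two lines, each
carrying `φ(p^ν)` primitive points. So there are `(1 + (D/p))·φ(p^ν)` primitive zeros.
The other zeros mod `p^(ν+2)` are `p·w` with `Q(w) ≡ 0` mod `p^ν`, which gives `p² ρ(p^ν)`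
of them (and only `(0, 0)` mod `p`). The closed formula follows from this two-step
recursion, and the bound from `φ(p^ν) ≤ p^ν`.
-/

open Finset

/-- `ρ(1,1,p^ν)`: number of `x ∈ [0, p^ν)²` with `p^ν ∣ Q(x)` for
`Q = a x₁² + b x₂² + c x₁x₂`. -/
def rhoQ (a b c : ℤ) (m : ℕ) : ℕ :=
  ((Finset.range m ×ˢ Finset.range m).filter
    (fun x => (m : ℤ) ∣ a * x.1 ^ 2 + b * x.2 ^ 2 + c * x.1 * x.2)).card

def binaryForm {R : Type*} [CommRing R] (a b c x y : R) : R := a * x ^ 2 + b * y ^ 2 + c * x * y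

theorem map_binaryForm {R S : Type*} [CommRing R] [CommRing S] (f : R →+* S) (a b c x y : R) :
    f (binaryForm a b c x y) = binaryForm (f a) (f b) (f c) (f x) (f y) := by
  simp [binaryForm]

theorem binaryForm_eq_zero_iff_of_not_isSquare {K : Type*} [Field K] {a b c : K}
    (hD : ¬ IsSquare (c ^ 2 - 4 * a * b)) {x y : K} :
    binaryForm a b c x y = 0 ↔ x = 0 ∧ y = 0 := by
  refine ⟨fun hQ => ?_, by rintro ⟨rfl, rfl⟩; simp [binaryForm]⟩
  have ha : a ≠ 0 := by
    rintro rfl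
    exact hD ⟨c, by ring⟩
  have hy : y = 0 := by
    by_contra hy
    refine hD ⟨(2 * a * x + c * y) / y, ?_⟩
    field_simp
    unfold binaryForm at hQ
    linear_combination (-4 * a) * hQ
  subst hy
  have : a * x ^ 2 = 0 := by simpa [binaryForm] using hQ
  simpa [ha] using this

section LocalRing

variable {R : Type*} [CommRing R]

theorem card_line_isUnit [Fintype R] [DecidableEq R] {α : R} (hα : IsUnit α) (β : R) :
    #{z : R × R | α * z.1 + β * z.2 = 0 ∧ IsUnit z.2} = Fintype.card Rˣ := by
  obtain ⟨u, rfl⟩ := hα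
  have hinj : Function.Injective fun v : Rˣ => (-(↑u⁻¹ * β * v), (v : R)) :=
    fun v w h => Units.ext (congrArg Prod.snd h)
  rw [← card_univ, ← card_image_of_injective univ hinj]
  congr 1
  ext ⟨x, y⟩
  simp only [mem_filter, mem_univ, true_and, mem_image, Prod.mk.injEq]
  constructor
  · rintro ⟨hxy, v, rfl⟩
    refine ⟨v, ?_, rfl⟩
    linear_combination (-(↑u⁻¹ : R)) * hxy + x * u.inv_mul
  · rintro ⟨v, rfl, rfl⟩
    refine ⟨?_, v.isUnit⟩
    linear_combination (-(β * v)) * u.mul_inv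

theorem eq_zero_or_eq_zero_of_mul_eq_zero_of_isUnit_sub [IsLocalRing R] {u v : R}
    (h : u * v = 0) (huv : IsUnit (u - v)) : u = 0 ∨ v = 0 := by
  rw [sub_eq_add_neg] at huv
  rcases IsLocalRing.isUnit_or_isUnit_of_isUnit_add huv with hu | hv
  · exact Or.inr ((hu.mul_right_eq_zero).mp h)
  · exact Or.inl ((hv.neg.mul_left_eq_zero).mp (by simpa using h))

theorem card_primitive_zeros_of_sq_eq_discr [IsLocalRing R] [Fintype R] [DecidableEq R]
    {A B C δ : R}
    (h2 : IsUnit (2 : R)) (hA : IsUnit A) (hδ : IsUnit δ) (hD : δ ^ 2 = C ^ 2 - 4 * A * B) :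
    #{z : R × R | binaryForm A B C z.1 z.2 = 0 ∧ (IsUnit z.1 ∨ IsUnit z.2)} =
      2 * Fintype.card Rˣ := by
  have h2A : IsUnit (2 * A) := h2.mul hA
  -- The two factors differ by `-2δy`, a unit when `y` is one, so they cannot both be nonunits.
  have factor (x y : R) : (2 * A) * (2 * binaryForm A B C x y) =
      (2 * A * x + (C - δ) * y) * (2 * A * x + (C + δ) * y) := by
    unfold binaryForm
    linear_combination y ^ 2 * hD
  have hsub (x y : R) : (2 * A * x + (C - δ) * y) - (2 * A * x + (C + δ) * y) = -(2 * δ * y) := by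
    ring
  have hlines : univ.filter (fun z : R × R => binaryForm A B C z.1 z.2 = 0 ∧
        (IsUnit z.1 ∨ IsUnit z.2)) =
      univ.filter (fun z : R × R => 2 * A * z.1 + (C - δ) * z.2 = 0 ∧ IsUnit z.2) ∪
        univ.filter (fun z : R × R => 2 * A * z.1 + (C + δ) * z.2 = 0 ∧ IsUnit z.2) := by
    rw [← filter_or]
    refine filter_congr fun ⟨x, y⟩ _ => ⟨fun ⟨hQ, hprim⟩ => ?_, fun h => ?_⟩
    · have hy : IsUnit y := by
        refine hprim.elim (fun hx => ?_) id
        have : A * x ^ 2 = y * -(B * y + C * x) := by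
          unfold binaryForm at hQ; linear_combination hQ
        exact isUnit_of_mul_isUnit_left (this ▸ hA.mul (hx.pow 2))
      have hL := eq_zero_or_eq_zero_of_mul_eq_zero_of_isUnit_sub
        (by rw [← factor, hQ, mul_zero, mul_zero]) (hsub x y ▸ ((h2.mul hδ).mul hy).neg)
      exact hL.imp (⟨·, hy⟩) (⟨·, hy⟩)
    · refine ⟨?_, Or.inr (h.elim And.right And.right)⟩
      have : (2 * A) * (2 * binaryForm A B C x y) = 0 := by
        rcases h with ⟨hL, -⟩ | ⟨hL, -⟩ <;> simp [factor, hL]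
      exact (h2.mul_right_eq_zero).mp ((h2A.mul_right_eq_zero).mp this)
  rw [hlines, card_union_of_disjoint, card_line_isUnit h2A, card_line_isUnit h2A, two_mul]
  refine disjoint_filter.mpr fun ⟨x, y⟩ _ ⟨hLm, hy⟩ ⟨hLp, _⟩ => ?_
  exact ((h2.mul hδ).mul hy).neg.ne_zero (by rw [← hsub, hLm, hLp, sub_zero])

end LocalRing

theorem card_filter_comp_mul_card {G H : Type*} [AddGroup G] [AddGroup H] [Fintype G]
    [Fintype H] [DecidableEq H] {f : G →+ H} (hf : Function.Surjective f) (P : H → Prop)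
    [DecidablePred P] :
    #{g | P (f g)} * Fintype.card H = Fintype.card G * #{h | P h} := by
  have hcount (Q : H → Prop) [DecidablePred Q] :
      #{g | Q (f g)} = #{g | f g = 0} * #{h | Q h} := by
    rw [card_eq_sum_card_fiberwise (t := {h | Q h}) (fun g hg => by simpa using hg),
      sum_const_nat fun h hQ => ?_, mul_comm]
    rw [filter_filter, ← AddMonoidHom.card_fiber_eq_of_mem_range f (hf h) (hf 0)]
    refine congrArg card (filter_congr fun g _ => ?_)
    exact ⟨And.right, fun hg => ⟨hg ▸ (mem_filter.mp hQ).2, hg⟩⟩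
  have hG := hcount fun _ => True
  simp only [filter_true, card_univ] at hG
  rw [hcount P, hG]
  ring

theorem card_filter_castHom_prodMap (n k : ℕ) [NeZero n] [NeZero k]
    (P : ZMod n × ZMod n → Prop) [DecidablePred P] :
    #{w : ZMod (n * k) × ZMod (n * k) |
        P (ZMod.castHom (dvd_mul_right n k) (ZMod n) w.1,
          ZMod.castHom (dvd_mul_right n k) (ZMod n) w.2)} = k ^ 2 * #{z | P z} := by
  let π := (ZMod.castHom (dvd_mul_right n k) (ZMod n)).toAddMonoidHom
  have hπ : Function.Surjective π := ZMod.castHom_surjective (dvd_mul_right n k)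
  have := card_filter_comp_mul_card (f := π.prodMap π) (hπ.prodMap hπ) P
  simp only [Fintype.card_prod, ZMod.card] at this
  refine Nat.eq_of_mul_eq_mul_right (Nat.pos_of_ne_zero (NeZero.ne (n * n))) ?_
  change #{g | P (π.prodMap π g)} * (n * n) = _
  rw [this]
  ring

namespace ZMod

variable {p ν : ℕ} [Fact p.Prime]

theorem isUnit_prime_pow_iff_not_dvd_val (hν : ν ≠ 0) (x : ZMod (p ^ ν)) :
    IsUnit x ↔ ¬ p ∣ x.val := by
  conv_lhs => rw [← natCast_zmod_val x]
  exact isUnit_natCast_iff_not_dvd_pow Fact.out (Nat.pos_of_ne_zero hν)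

theorem isUnit_prime_pow_iff_castHom_ne_zero (hν : ν ≠ 0) (x : ZMod (p ^ ν)) :
    IsUnit x ↔ castHom (dvd_pow_self p hν) (ZMod p) x ≠ 0 := by
  rw [isUnit_prime_pow_iff_not_dvd_val hν, castHom_apply, cast_eq_val, Ne, natCast_eq_zero_iff]

theorem isUnit_intCast_prime_pow_iff (hν : ν ≠ 0) (t : ℤ) :
    IsUnit (t : ZMod (p ^ ν)) ↔ ¬ (p : ℤ) ∣ t := by
  rw [isUnit_prime_pow_iff_castHom_ne_zero hν, map_intCast, Ne, intCast_zmod_eq_zero_iff_dvd]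

theorem isLocalRing_prime_pow (hν : ν ≠ 0) : IsLocalRing (ZMod (p ^ ν)) := by
  have : Fact (1 < p ^ ν) := ⟨Nat.one_lt_pow hν (Fact.out : p.Prime).one_lt⟩
  refine IsLocalRing.of_isUnit_or_isUnit_of_isUnit_add fun x y hxy => ?_
  simp only [isUnit_prime_pow_iff_castHom_ne_zero hν, map_add] at hxy ⊢
  by_contra! h
  exact hxy (by rw [h.1, h.2, add_zero])

end ZMod

theorem not_dvd_two_of_prime_ne_two {p : ℕ} [Fact p.Prime] (hp : p ≠ 2) : ¬ (p : ℤ) ∣ 2 :=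
  fun h => hp ((Nat.prime_dvd_prime_iff_eq Fact.out Nat.prime_two).mp (by exact_mod_cast h))

open Polynomial in
theorem PadicInt.exists_sq_eq_intCast {p : ℕ} [Fact p.Prime] (hp : p ≠ 2) {D : ℤ}
    (hD : ¬ (p : ℤ) ∣ D) (hsq : IsSquare (D : ZMod p)) : ∃ z : ℤ_[p], z ^ 2 = D := by
  obtain ⟨t, hroot⟩ : ∃ t : ℤ, (p : ℤ) ∣ t ^ 2 - D := by
    obtain ⟨s, hs⟩ := hsq
    refine ⟨s.val, ?_⟩
    rw [← ZMod.intCast_zmod_eq_zero_iff_dvd]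
    push_cast
    rw [ZMod.natCast_zmod_val, hs, sq, sub_self]
  have hderiv : ¬ (p : ℤ) ∣ 2 * t := by
    intro h
    rcases (Nat.prime_iff_prime_int.mp Fact.out).dvd_or_dvd h with h2 | hpt
    · exact not_dvd_two_of_prime_ne_two hp h2
    · exact hD (by simpa using dvd_sub (dvd_pow hpt two_ne_zero) hroot)
  let F : ℤ[X] := X ^ 2 - C D
  have hF : aeval (t : ℤ_[p]) F = ((t ^ 2 - D : ℤ) : ℤ_[p]) := by simp [F]
  have hF' : aeval (t : ℤ_[p]) (derivative F) = ((2 * t : ℤ) : ℤ_[p]) := by simp [F, map_ofNat]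
  have hnorm : ‖((2 * t : ℤ) : ℤ_[p])‖ = 1 :=
    le_antisymm (norm_le_one _) (not_lt.mp (mt (norm_int_lt_one_iff_dvd _).mp hderiv))
  obtain ⟨z, hz, -⟩ := hensels_lemma (F := F) (a := (t : ℤ_[p])) (by
    rw [hF, hF', hnorm, one_pow]
    exact (norm_int_lt_one_iff_dvd _).mpr hroot)
  exact ⟨z, by simpa [F, sub_eq_zero] using hz⟩

theorem binaryForm_natCast_eq_zero_iff (m : ℕ) (a b c : ℤ) (x y : ℕ) :
    binaryForm (a : ZMod m) b c x y = 0 ↔ (m : ℤ) ∣ binaryForm a b c (x : ℤ) y := by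
  rw [← ZMod.intCast_zmod_eq_zero_iff_dvd]
  simp [binaryForm]

def zeroSet (a b c : ℤ) (m : ℕ) [NeZero m] : Finset (ZMod m × ZMod m) :=
  {z | binaryForm (a : ZMod m) b c z.1 z.2 = 0}

@[simp]
theorem mem_zeroSet {a b c : ℤ} {m : ℕ} [NeZero m] {z : ZMod m × ZMod m} :
    z ∈ zeroSet a b c m ↔ binaryForm (a : ZMod m) b c z.1 z.2 = 0 := by
  simp [zeroSet]

theorem rhoQ_eq_card_zeroSet (a b c : ℤ) (m : ℕ) [NeZero m] :
    rhoQ a b c m = #(zeroSet a b c m) := by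
  change #{x ∈ range m ×ˢ range m | (m : ℤ) ∣ binaryForm a b c (x.1 : ℤ) x.2} = _
  refine card_nbij' (fun x => ((x.1 : ZMod m), (x.2 : ZMod m))) (fun z => (z.1.val, z.2.val))
    (fun x hx => ?_) (fun z hz => ?_) (fun x hx => ?_) (fun z _ => ?_)
  · simp only [mem_coe, mem_filter, mem_product, mem_range] at hx
    simpa [zeroSet, binaryForm_natCast_eq_zero_iff] using hx.2
  · simp only [mem_coe, mem_filter, mem_product, mem_range, zeroSet, mem_univ,
      true_and] at hz ⊢
    rw [← binaryForm_natCast_eq_zero_iff, ZMod.natCast_zmod_val, ZMod.natCast_zmod_val]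
    exact ⟨⟨ZMod.val_lt _, ZMod.val_lt _⟩, hz⟩
  · simp only [mem_coe, mem_filter, mem_product, mem_range] at hx
    simp [ZMod.val_cast_of_lt hx.1.1, ZMod.val_cast_of_lt hx.1.2]
  · simp only [ZMod.natCast_zmod_val]

theorem card_zeroSet_swap (a b c : ℤ) (m : ℕ) [NeZero m] :
    #(zeroSet b a c m) = #(zeroSet a b c m) :=
  card_equiv (Equiv.prodComm _ _) fun z => by
    simp only [mem_zeroSet, binaryForm, Equiv.prodComm_apply, Prod.fst_swap, Prod.snd_swap]
    constructor <;> intro h <;> linear_combination h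

theorem card_zeroSet_shear (a b c : ℤ) (m : ℕ) [NeZero m] :
    #(zeroSet (a + b + c) b (2 * b + c) m) = #(zeroSet a b c m) :=
  card_equiv (Equiv.prodShear (Equiv.refl _) Equiv.addLeft) fun z => by
    simp only [mem_zeroSet, binaryForm, Equiv.prodShear_apply, Equiv.refl_apply,
      Equiv.coe_addLeft]
    push_cast
    constructor <;> intro h <;> linear_combination h

theorem exists_not_dvd_coeff_card_zeroSet_eq {n a b c : ℤ}
    (hD : ¬ n ∣ c ^ 2 - 4 * a * b) :
    ∃ a' b' c' : ℤ, ¬ n ∣ a' ∧ c' ^ 2 - 4 * a' * b' = c ^ 2 - 4 * a * b ∧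
      ∀ (m : ℕ) [NeZero m], #(zeroSet a' b' c' m) = #(zeroSet a b c m) := by
  by_cases ha : n ∣ a
  · by_cases hb : n ∣ b
    · refine ⟨a + b + c, b, 2 * b + c, fun habc => hD ?_, by ring, card_zeroSet_shear a b c⟩
      have hc : n ∣ c := by simpa using (habc.sub (ha.add hb))
      exact (dvd_pow hc two_ne_zero).sub ((ha.mul_left 4).mul_right b)
    · exact ⟨b, a, c, hb, by ring, card_zeroSet_swap a b c⟩
  · exact ⟨a, b, c, ha, rfl, fun _ _ => rfl⟩

theorem card_zeroSet_one (a b c : ℤ) : #(zeroSet a b c 1) = 1 := by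
  rw [zeroSet, filter_true_of_mem fun z _ => Subsingleton.elim _ _]
  rfl

section PrimePower

variable {p : ℕ} [Fact p.Prime]

theorem card_primitive_zeroSet (hp : p ≠ 2) {a b c : ℤ} (ha : ¬ (p : ℤ) ∣ a)
    (hD : ¬ (p : ℤ) ∣ c ^ 2 - 4 * a * b) {ν : ℕ} (hν : ν ≠ 0) :
    (#{z ∈ zeroSet a b c (p ^ ν) | IsUnit z.1 ∨ IsUnit z.2} : ℤ) =
      (1 + legendreSym p (c ^ 2 - 4 * a * b)) * (p ^ ν).totient := by
  have hD₀ : ((c ^ 2 - 4 * a * b : ℤ) : ZMod p) ≠ 0 := by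
    rwa [Ne, ZMod.intCast_zmod_eq_zero_iff_dvd]
  rw [zeroSet, filter_filter]
  rcases legendreSym.eq_one_or_neg_one p hD₀ with hχ | hχ
  · obtain ⟨z, hz⟩ := PadicInt.exists_sq_eq_intCast hp hD ((legendreSym.eq_one_iff p hD₀).mp hχ)
    have := ZMod.isLocalRing_prime_pow (p := p) hν
    have hunit {t : ℤ} (ht : ¬ (p : ℤ) ∣ t) : IsUnit (t : ZMod (p ^ ν)) :=
      (ZMod.isUnit_intCast_prime_pow_iff hν t).mpr ht
    have hδ : PadicInt.toZModPow ν z ^ 2 = ((c ^ 2 - 4 * a * b : ℤ) : ZMod (p ^ ν)) := by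
      rw [← map_pow, hz, map_intCast]
    rw [card_primitive_zeros_of_sq_eq_discr
      (by simpa using hunit (not_dvd_two_of_prime_ne_two hp)) (hunit ha)
      ((isUnit_pow_iff two_ne_zero).mp (hδ ▸ hunit hD)) (by rw [hδ]; push_cast; ring),
      ZMod.card_units_eq_totient, hχ]
    push_cast
    ring
  · rw [hχ, add_neg_cancel, zero_mul, Nat.cast_eq_zero, card_eq_zero, filter_eq_empty_iff]
    rintro ⟨x, y⟩ - ⟨hQ, hprim⟩
    have hres := congrArg (ZMod.castHom (dvd_pow_self p hν) (ZMod p)) hQ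
    rw [map_binaryForm, map_zero, map_intCast, map_intCast, map_intCast] at hres
    have hns : ¬ IsSquare ((c : ZMod p) ^ 2 - 4 * a * b) := by
      simpa using (legendreSym.eq_neg_one_iff p).mp hχ
    rw [binaryForm_eq_zero_iff_of_not_isSquare hns] at hres
    simp [ZMod.isUnit_prime_pow_iff_castHom_ne_zero hν, hres] at hprim

theorem card_imprimitive_zeroSet_prime (a b c : ℤ) :
    #{z ∈ zeroSet a b c (p ^ 1) | ¬(IsUnit z.1 ∨ IsUnit z.2)} = 1 := by
  have hzero (x : ZMod (p ^ 1)) : ¬ IsUnit x ↔ x = 0 := by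
    rw [ZMod.isUnit_prime_pow_iff_not_dvd_val one_ne_zero, not_not, ← ZMod.val_eq_zero]
    exact ⟨fun h => Nat.eq_zero_of_dvd_of_lt h ((ZMod.val_lt x).trans_eq (pow_one p)),
      fun h => h ▸ dvd_zero p⟩
  rw [card_eq_one]
  refine ⟨0, eq_singleton_iff_unique_mem.mpr ⟨?_, fun z hz => ?_⟩⟩
  · simp [hzero, binaryForm]
  · simp only [mem_filter, not_or, hzero] at hz
    exact Prod.ext hz.2.1 hz.2.2

theorem card_imprimitive_zeroSet_prime_pow_add_two (a b c : ℤ) (ν : ℕ) :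
    #{z ∈ zeroSet a b c (p ^ (ν + 2)) | ¬(IsUnit z.1 ∨ IsUnit z.2)} =
      p ^ 2 * #(zeroSet a b c (p ^ ν)) := by
  have hp : 0 < p := (Fact.out : p.Prime).pos
  -- The nonunits of `ZMod (p ^ (ν + 2))` are the `p * w` with `w : ZMod (p ^ (ν + 1))`, and
  -- `Q (p * w) = p ^ 2 * Q w` vanishes mod `p ^ (ν + 2)` iff `Q w` vanishes mod `p ^ ν`.
  let μ (w : ZMod (p ^ ν * p)) : ZMod (p ^ (ν + 2)) := ((p * w.val : ℕ) : ZMod (p ^ (ν + 2)))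
  have hlt {k : ℕ} (hk : k < p ^ ν * p) : p * k < p ^ (ν + 2) := by
    rw [show p ^ (ν + 2) = p * (p ^ ν * p) by ring]
    exact Nat.mul_lt_mul_of_pos_left hk hp
  have hval (w) : (μ w).val = p * w.val := ZMod.val_natCast_of_lt (hlt (ZMod.val_lt w))
  have hμ : Function.Injective μ := fun w w' h =>
    ZMod.val_injective _ (Nat.eq_of_mul_eq_mul_left hp (by rw [← hval, ← hval, h]))
  have hrange (x : ZMod (p ^ (ν + 2))) : ¬ IsUnit x ↔ ∃ w, μ w = x := by
    rw [ZMod.isUnit_prime_pow_iff_not_dvd_val (by omega), not_not]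
    refine ⟨fun ⟨k, hk⟩ => ⟨k, ZMod.val_injective _ ?_⟩, fun ⟨w, hw⟩ => ⟨w.val, hw ▸ hval w⟩⟩
    have hk' : k < p ^ ν * p := by
      refine Nat.lt_of_mul_lt_mul_left (a := p) ?_
      rw [← hk, show p * (p ^ ν * p) = p ^ (ν + 2) by ring]
      exact ZMod.val_lt x
    rw [hval, ZMod.val_natCast_of_lt hk', hk]
  have hQ (w : ZMod (p ^ ν * p) × ZMod (p ^ ν * p)) :
      binaryForm (a : ZMod (p ^ (ν + 2))) b c (μ w.1) (μ w.2) = 0 ↔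
        binaryForm (a : ZMod (p ^ ν)) b c (ZMod.castHom (dvd_mul_right _ p) _ w.1)
          (ZMod.castHom (dvd_mul_right _ p) _ w.2) = 0 := by
    simp only [μ, ZMod.castHom_apply, ZMod.cast_eq_val, binaryForm_natCast_eq_zero_iff]
    push_cast
    rw [show binaryForm a b c (p * w.1.val) (p * w.2.val) =
        (p : ℤ) ^ 2 * binaryForm a b c w.1.val w.2.val by unfold binaryForm; ring,
      show (p : ℤ) ^ (ν + 2) = p ^ 2 * p ^ ν by ring]
    exact mul_dvd_mul_iff_left (by positivity)
  calc #{z ∈ zeroSet a b c (p ^ (ν + 2)) | ¬(IsUnit z.1 ∨ IsUnit z.2)}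
      = #(({w | binaryForm (a : ZMod (p ^ (ν + 2))) b c (μ w.1) (μ w.2) = 0} :
          Finset (ZMod (p ^ ν * p) × ZMod (p ^ ν * p))).image (Prod.map μ μ)) := by
        congr 1
        ext ⟨x, y⟩
        simp only [mem_filter, mem_zeroSet, not_or, hrange, mem_image, mem_univ, true_and,
          Prod.exists, Prod.map, Prod.mk.injEq]
        constructor
        · rintro ⟨hQ, ⟨w₁, rfl⟩, ⟨w₂, rfl⟩⟩
          exact ⟨w₁, w₂, hQ, rfl, rfl⟩
        · rintro ⟨w₁, w₂, hQ, rfl, rfl⟩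
          exact ⟨hQ, ⟨w₁, rfl⟩, ⟨w₂, rfl⟩⟩
    _ = #{w : ZMod (p ^ ν * p) × ZMod (p ^ ν * p) |
          binaryForm (a : ZMod (p ^ (ν + 2))) b c (μ w.1) (μ w.2) = 0} :=
        card_image_of_injective _ (hμ.prodMap hμ)
    _ = p ^ 2 * #(zeroSet a b c (p ^ ν)) := by
        simp only [hQ]
        exact card_filter_castHom_prodMap (p ^ ν) p
          fun z => binaryForm (a : ZMod (p ^ ν)) b c z.1 z.2 = 0

theorem card_zeroSet_prime_pow_eq_add (hp : p ≠ 2) {a b c : ℤ} (ha : ¬ (p : ℤ) ∣ a)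
    (hD : ¬ (p : ℤ) ∣ c ^ 2 - 4 * a * b) {ν : ℕ} (hν : ν ≠ 0) :
    (#(zeroSet a b c (p ^ ν)) : ℤ) = (1 + legendreSym p (c ^ 2 - 4 * a * b)) * (p ^ ν).totient +
      #{z ∈ zeroSet a b c (p ^ ν) | ¬(IsUnit z.1 ∨ IsUnit z.2)} := by
  rw [← card_primitive_zeroSet hp ha hD hν, ← Nat.cast_add, card_filter_add_card_filter_not]

theorem card_zeroSet_prime_pow (hp : p ≠ 2) {a b c : ℤ} (ha : ¬ (p : ℤ) ∣ a)
    (hD : ¬ (p : ℤ) ∣ c ^ 2 - 4 * a * b) (ν : ℕ) :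
    (#(zeroSet a b c (p ^ ν)) : ℤ) =
      (p ^ ν).totient * (1 + legendreSym p (c ^ 2 - 4 * a * b)) * ((ν + 1) / 2 : ℕ) +
        (p : ℤ) ^ (2 * (ν - (ν + 1) / 2)) := by
  induction ν using Nat.twoStepInduction with
  | zero =>
    change (#(zeroSet a b c 1) : ℤ) = _
    rw [card_zeroSet_one]
    simp
  | one =>
    rw [card_zeroSet_prime_pow_eq_add hp ha hD one_ne_zero, card_imprimitive_zeroSet_prime]
    push_cast
    ring
  | more ν ih _ =>
    rw [card_zeroSet_prime_pow_eq_add hp ha hD (by omega),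
      card_imprimitive_zeroSet_prime_pow_add_two, Nat.cast_mul, ih,
      show (ν + 2 + 1) / 2 = (ν + 1) / 2 + 1 by omega,
      show 2 * (ν + 2 - ((ν + 1) / 2 + 1)) = 2 * (ν - (ν + 1) / 2) + 2 by omega]
    -- `φ (p ^ (ν + 2)) = p ^ 2 * φ (p ^ ν)` fails at `ν = 0`, where `(ν + 1) / 2 = 0` instead.
    rcases Nat.eq_zero_or_pos ν with rfl | hν
    · simp
      ring
    · obtain ⟨n, rfl⟩ := Nat.exists_eq_add_of_le' hν
      rw [Nat.totient_prime_pow_succ Fact.out, Nat.totient_prime_pow_succ Fact.out]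
      push_cast
      ring

theorem rhoQ_prime_pow (hp : p ≠ 2) {a b c : ℤ} (hD : ¬ (p : ℤ) ∣ c ^ 2 - 4 * a * b) (ν : ℕ) :
    (rhoQ a b c (p ^ ν) : ℤ) =
      (p ^ ν).totient * (1 + legendreSym p (c ^ 2 - 4 * a * b)) * ((ν + 1) / 2 : ℕ) +
        (p : ℤ) ^ (2 * (ν - (ν + 1) / 2)) := by
  obtain ⟨a', b', c', ha', hdisc, hcard⟩ := exists_not_dvd_coeff_card_zeroSet_eq hD
  rw [rhoQ_eq_card_zeroSet, ← hcard, card_zeroSet_prime_pow hp ha' (hdisc ▸ hD), hdisc]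

theorem two_mul_totient_mul_add_le (ν : ℕ) :
    2 * (p ^ ν).totient * ((ν + 1) / 2) + p ^ (2 * (ν - (ν + 1) / 2)) ≤ (ν + 1) * p ^ ν := by
  obtain ⟨m, rfl | rfl⟩ := Nat.even_or_odd' ν
  · rw [show (2 * m + 1) / 2 = m by omega, show 2 * (2 * m - m) = 2 * m by omega]
    nlinarith [Nat.totient_le (p ^ (2 * m))]
  · rw [show (2 * m + 1 + 1) / 2 = m + 1 by omega, show 2 * (2 * m + 1 - (m + 1)) = 2 * m by omega,
      Nat.totient_prime_pow_succ Fact.out, pow_succ]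
    obtain ⟨q, hq⟩ : ∃ q, p = q + 1 := ⟨p - 1, by have := (Fact.out : p.Prime).pos; omega⟩
    rw [hq, Nat.add_sub_cancel]
    nlinarith [Nat.zero_le ((q + 1) ^ (2 * m)), Nat.zero_le q, Nat.zero_le m]

theorem rhoQ_prime_pow_le (hp : p ≠ 2) {a b c : ℤ} (hD : ¬ (p : ℤ) ∣ c ^ 2 - 4 * a * b) (ν : ℕ) :
    rhoQ a b c (p ^ ν) ≤ (ν + 1) * p ^ ν := by
  have hχ : legendreSym p (c ^ 2 - 4 * a * b) ≤ 1 := by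
    rcases legendreSym.eq_one_or_neg_one p (by rwa [Ne, ZMod.intCast_zmod_eq_zero_iff_dvd]) with
      h | h <;> simp [h]
  zify
  calc (rhoQ a b c (p ^ ν) : ℤ)
      ≤ (p ^ ν).totient * 2 * ((ν + 1) / 2 : ℕ) + (p : ℤ) ^ (2 * (ν - (ν + 1) / 2)) := by
        rw [rhoQ_prime_pow hp hD]
        gcongr
        linarith
    _ ≤ (ν + 1) * p ^ ν := by
        have := two_mul_totient_mul_add_le (p := p) ν
        rw [mul_comm 2] at this
        exact_mod_cast this

end PrimePower

theorem stmt10_general (a b c : ℤ) (p : ℕ) [Fact p.Prime] (hodd : p ≠ 2)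
    (hndvd : ¬ (p : ℤ) ∣ (c ^ 2 - 4 * a * b)) (ν : ℕ) :
    (rhoQ a b c (p ^ ν) : ℤ) =
      (Nat.totient (p ^ ν) : ℤ) * (1 + legendreSym p (c ^ 2 - 4 * a * b)) * ((ν + 1) / 2 : ℕ) +
        (p : ℤ) ^ (2 * (ν - (ν + 1) / 2)) ∧
    rhoQ a b c (p ^ ν) ≤ (ν + 1) * p ^ ν :=
  ⟨rhoQ_prime_pow hodd hndvd ν, rhoQ_prime_pow_le hodd hndvd ν⟩

theorem stmt10 (a b c : ℤ) (hprim : Int.gcd (Int.gcd a b) c = 1)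
    (hirr : ¬ IsSquare (c ^ 2 - 4 * a * b)) (p : ℕ) [Fact p.Prime] (hodd : p ≠ 2)
    (hndvd : ¬ (p : ℤ) ∣ (c ^ 2 - 4 * a * b)) (ν : ℕ) :
    (rhoQ a b c (p ^ ν) : ℤ) =
      (Nat.totient (p ^ ν) : ℤ) * (1 + legendreSym p (c ^ 2 - 4 * a * b)) * ((ν + 1) / 2 : ℕ) +
        (p : ℤ) ^ (2 * (ν - (ν + 1) / 2)) ∧
    rhoQ a b c (p ^ ν) ≤ (ν + 1) * p ^ ν :=
  stmt10_general a b c p hodd hndvd ν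
end

section
/- Define the multiplicative function ψ₀ on triples of prime powers by ψ₀(p^{β₁}, p^{β₂}, p^{β₃}) = max over β ≤ max{β₁, β₂, ⌈β₃/2⌉} of p^{min{β,β₁} + min{β,β₂} + min{2β,β₃} − 2β}. Then ψ₀(D₁, D₂, D₃) ≤ (D₁D₂D₃)^{1/2} for all positive integers D₁, D₂, D₃, and if D₃ is squarefree then ψ₀(D₁,D₂,D₃) = gcd(D₁,D₂,D₃). -/
/-- Local exponent of `ψ₀` at a prime with valuations `b₁, b₂, b₃`:
`max` over `β ≤ max{b₁, b₂, ⌈b₃/2⌉}` of `min{β,b₁} + min{β,b₂} + min{2β,b₃} − 2β`. -/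
def psiExp (b₁ b₂ b₃ : ℕ) : ℕ :=
  Finset.sup (Finset.range (max (max b₁ b₂) ((b₃ + 1) / 2) + 1))
    (fun β => min β b₁ + min β b₂ + min (2 * β) b₃ - 2 * β)

/-- The multiplicative function `ψ₀`, extended to all triples of positive integers. -/
def psi0 (D₁ D₂ D₃ : ℕ) : ℕ :=
  ∏ p ∈ (D₁ * D₂ * D₃).primeFactors,
    p ^ psiExp (D₁.factorization p) (D₂.factorization p) (D₃.factorization p)

-- Each candidate satisfies `min{β,b₁} + min{β,b₂} + min{2β,b₃} ≤ 2β + (b₁+b₂+b₃)/2`.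
theorem two_mul_psiExp_le (b₁ b₂ b₃ : ℕ) : 2 * psiExp b₁ b₂ b₃ ≤ b₁ + b₂ + b₃ := by
  obtain ⟨β, -, hβ⟩ := Finset.exists_mem_eq_sup
    (Finset.range (max (max b₁ b₂) ((b₃ + 1) / 2) + 1)) ⟨0, Finset.mem_range.2 (by omega)⟩
    (fun β => min β b₁ + min β b₂ + min (2 * β) b₃ - 2 * β)
  rw [psiExp, hβ]
  omega

theorem psiExp_of_le_one (b₁ b₂ : ℕ) {b₃ : ℕ} (h : b₃ ≤ 1) :
    psiExp b₁ b₂ b₃ = min (min b₁ b₂) b₃ := by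
  refine le_antisymm (Finset.sup_le fun β _ => by omega) ?_
  have hmem : min (min b₁ b₂) b₃ ∈ Finset.range (max (max b₁ b₂) ((b₃ + 1) / 2) + 1) :=
    Finset.mem_range.2 (by omega)
  have := Finset.le_sup (f := fun β => min β b₁ + min β b₂ + min (2 * β) b₃ - 2 * β) hmem
  unfold psiExp
  omega

theorem Nat.prod_pow_factorization_of_primeFactors_subset {n : ℕ} {s : Finset ℕ} (hn : n ≠ 0)
    (hs : n.primeFactors ⊆ s) : ∏ p ∈ s, p ^ n.factorization p = n := by
  rw [← Finsupp.prod_of_support_subset _ (by simpa using hs) _ (fun _ _ => pow_zero _)]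
  exact Nat.prod_factorization_pow_eq_self hn

theorem psi0_sq_le {D₁ D₂ D₃ : ℕ} (h₁ : D₁ ≠ 0) (h₂ : D₂ ≠ 0) (h₃ : D₃ ≠ 0) :
    psi0 D₁ D₂ D₃ ^ 2 ≤ D₁ * D₂ * D₃ := by
  have hfac (p : ℕ) : (D₁ * D₂ * D₃).factorization p
      = D₁.factorization p + D₂.factorization p + D₃.factorization p := by
    simp [Nat.factorization_mul (mul_ne_zero h₁ h₂) h₃, Nat.factorization_mul h₁ h₂]
  calc psi0 D₁ D₂ D₃ ^ 2
      = ∏ p ∈ (D₁ * D₂ * D₃).primeFactors,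
          p ^ (2 * psiExp (D₁.factorization p) (D₂.factorization p) (D₃.factorization p)) := by
        simp only [psi0, ← Finset.prod_pow, ← pow_mul, mul_comm]
    _ ≤ ∏ p ∈ (D₁ * D₂ * D₃).primeFactors, p ^ (D₁ * D₂ * D₃).factorization p := by
        refine Finset.prod_le_prod' fun p hp => ?_
        refine Nat.pow_le_pow_right (Nat.prime_of_mem_primeFactors hp).pos ?_
        rw [hfac]
        exact two_mul_psiExp_le _ _ _
    _ = D₁ * D₂ * D₃ :=
        Nat.prod_pow_factorization_of_primeFactors_subset (by positivity) subset_rfl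

theorem psi0_of_squarefree {D₁ D₂ D₃ : ℕ} (h₁ : D₁ ≠ 0) (h₂ : D₂ ≠ 0) (hsf : Squarefree D₃) :
    psi0 D₁ D₂ D₃ = Nat.gcd (Nat.gcd D₁ D₂) D₃ := by
  have h₃ := hsf.ne_zero
  have hgcd (p : ℕ) : (Nat.gcd (Nat.gcd D₁ D₂) D₃).factorization p
      = min (min (D₁.factorization p) (D₂.factorization p)) (D₃.factorization p) := by
    simp [Nat.factorization_gcd (Nat.gcd_ne_zero_left h₁) h₃, Nat.factorization_gcd h₁ h₂]
  have hsub : (Nat.gcd (Nat.gcd D₁ D₂) D₃).primeFactors ⊆ (D₁ * D₂ * D₃).primeFactors :=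
    Nat.primeFactors_mono ((Nat.gcd_dvd_right _ _).trans (dvd_mul_left _ _)) (by positivity)
  rw [← Nat.prod_pow_factorization_of_primeFactors_subset (Nat.gcd_ne_zero_right h₃) hsub]
  refine Finset.prod_congr rfl fun p _ => ?_
  rw [hgcd, psiExp_of_le_one _ _ (hsf.natFactorization_le_one p)]

theorem stmt12 (D₁ D₂ D₃ : ℕ) (h₁ : 0 < D₁) (h₂ : 0 < D₂) (h₃ : 0 < D₃) :
    (psi0 D₁ D₂ D₃ : ℝ) ≤ Real.sqrt ((D₁ * D₂ * D₃ : ℕ) : ℝ) ∧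
    (Squarefree D₃ → psi0 D₁ D₂ D₃ = Nat.gcd (Nat.gcd D₁ D₂) D₃) := by
  refine ⟨?_, psi0_of_squarefree h₁.ne' h₂.ne'⟩
  rw [Real.le_sqrt (by positivity) (by positivity)]
  exact_mod_cast psi0_sq_le h₁.ne' h₂.ne' h₃.ne'
end

section
/- Let L₁, L₂ be integral linear forms and Q an integral quadratic form with resultants Δ₁₂ = Res(L₁,L₂), Δ_{i3} = Res(L_i,Q). Let d be a squarefree positive integer and x ∈ ℤ². If d | L₁(x) and d | L₂(x), then d / gcd(d, Δ₁₂) divides gcd(x₁,x₂); if d | L_i(x) and d | Q(x), then d / gcd(d, Δ_{i3}) divides gcd(x₁,x₂). -/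
lemma key13 (d : ℕ) (hd : Squarefree d) (Δ x : ℤ) (h : (d : ℤ) ∣ Δ * x) :
    ((d / Int.gcd (d : ℤ) Δ : ℕ) : ℤ) ∣ x := by
  set g : ℕ := Int.gcd (d : ℤ) Δ with hg
  have hgd : g ∣ d := by
    have := Int.gcd_dvd_left (a := (d : ℤ)) (b := Δ)
    exact_mod_cast this
  set e : ℕ := d / g with he'
  have heg : e * g = d := Nat.div_mul_cancel hgd
  have he : e ∣ d := ⟨g, heg.symm⟩
  have hgnat : g = Nat.gcd d Δ.natAbs := by simp [hg, Int.gcd]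
  have hcop : Nat.Coprime e Δ.natAbs := by
    set h' := Nat.gcd e Δ.natAbs with hh'
    have h1 : h' ∣ e := Nat.gcd_dvd_left _ _
    have h2 : h' ∣ g := by
      rw [hgnat]
      exact Nat.dvd_gcd (h1.trans he) (Nat.gcd_dvd_right _ _)
    have hsq : h' * h' ∣ d := by rw [← heg]; exact mul_dvd_mul h1 h2
    exact Nat.isUnit_iff.mp (hd _ hsq)
  have hed : (e : ℤ) ∣ Δ * x := dvd_trans (by exact_mod_cast he) h
  have h3 : e ∣ (Δ * x).natAbs := by
    have := Int.natAbs_dvd_natAbs.mpr hed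
    simpa using this
  rw [Int.natAbs_mul] at h3
  have h4 : e ∣ x.natAbs := hcop.dvd_of_dvd_mul_left h3
  exact Int.natAbs_dvd_natAbs.mp (by simpa using h4)

lemma key13' (d : ℕ) (hd : Squarefree d) (Δ x : ℤ) (h : (d : ℤ) ∣ Δ * x ^ 2) :
    ((d / Int.gcd (d : ℤ) Δ : ℕ) : ℤ) ∣ x := by
  have h1 := key13 d hd Δ (x ^ 2) h
  set e : ℕ := d / Int.gcd (d : ℤ) Δ with he'
  have hgd : Int.gcd (d : ℤ) Δ ∣ d := by
    have := Int.gcd_dvd_left (a := (d : ℤ)) (b := Δ)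
    exact_mod_cast this
  have he : e ∣ d := Nat.div_dvd_of_dvd hgd
  have hesq : Squarefree e := hd.squarefree_of_dvd he
  have h2 : e ∣ x.natAbs ^ 2 := by
    have := Int.natAbs_dvd_natAbs.mpr h1
    simpa [Int.natAbs_pow] using this
  have h3 : e ∣ x.natAbs :=
    (hesq.dvd_pow_iff_dvd two_ne_zero).mp h2
  exact Int.natAbs_dvd_natAbs.mp (by simpa using h3)

lemma final13 (x₁ x₂ : ℤ) (e : ℕ) (h1 : (e : ℤ) ∣ x₁) (h2 : (e : ℤ) ∣ x₂) :
    e ∣ Int.gcd x₁ x₂ :=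
  Nat.dvd_gcd (by simpa using Int.natAbs_dvd_natAbs.mpr h1)
    (by simpa using Int.natAbs_dvd_natAbs.mpr h2)

theorem stmt13 (a₁ b₁ a₂ b₂ a₃ b₃ c₃ : ℤ) (d : ℕ) (hd : Squarefree d) (hd0 : 0 < d)
    (x₁ x₂ : ℤ) :
    ((d : ℤ) ∣ a₁ * x₁ + b₁ * x₂ → (d : ℤ) ∣ a₂ * x₁ + b₂ * x₂ →
      d / Int.gcd (d : ℤ) (a₁ * b₂ - a₂ * b₁) ∣ Int.gcd x₁ x₂) ∧
    ((d : ℤ) ∣ a₁ * x₁ + b₁ * x₂ → (d : ℤ) ∣ a₃ * x₁ ^ 2 + b₃ * x₂ ^ 2 + c₃ * x₁ * x₂ →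
      d / Int.gcd (d : ℤ) (a₃ * b₁ ^ 2 + b₃ * a₁ ^ 2 - c₃ * a₁ * b₁) ∣ Int.gcd x₁ x₂) ∧
    ((d : ℤ) ∣ a₂ * x₁ + b₂ * x₂ → (d : ℤ) ∣ a₃ * x₁ ^ 2 + b₃ * x₂ ^ 2 + c₃ * x₁ * x₂ →
      d / Int.gcd (d : ℤ) (a₃ * b₂ ^ 2 + b₃ * a₂ ^ 2 - c₃ * a₂ * b₂) ∣ Int.gcd x₁ x₂) := by
  have quad : ∀ a b : ℤ, (d : ℤ) ∣ a * x₁ + b * x₂ →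
      (d : ℤ) ∣ a₃ * x₁ ^ 2 + b₃ * x₂ ^ 2 + c₃ * x₁ * x₂ →
      d / Int.gcd (d : ℤ) (a₃ * b ^ 2 + b₃ * a ^ 2 - c₃ * a * b) ∣ Int.gcd x₁ x₂ := by
    intro a b hL hQ
    set Δ : ℤ := a₃ * b ^ 2 + b₃ * a ^ 2 - c₃ * a * b with hΔ
    have hx1 : (d : ℤ) ∣ Δ * x₁ ^ 2 := by
      have : Δ * x₁ ^ 2 = b ^ 2 * (a₃ * x₁ ^ 2 + b₃ * x₂ ^ 2 + c₃ * x₁ * x₂) +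
          (b₃ * (a * x₁ - b * x₂) - c₃ * b * x₁) * (a * x₁ + b * x₂) := by ring
      rw [this]
      exact dvd_add (hQ.mul_left _) (hL.mul_left _)
    have hx2 : (d : ℤ) ∣ Δ * x₂ ^ 2 := by
      have : Δ * x₂ ^ 2 = a ^ 2 * (a₃ * x₁ ^ 2 + b₃ * x₂ ^ 2 + c₃ * x₁ * x₂) +
          (a₃ * (b * x₂ - a * x₁) - c₃ * a * x₂) * (a * x₁ + b * x₂) := by ring
      rw [this]
      exact dvd_add (hQ.mul_left _) (hL.mul_left _)
    exact final13 _ _ _ (key13' d hd Δ x₁ hx1) (key13' d hd Δ x₂ hx2)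
  refine ⟨?_, quad a₁ b₁, quad a₂ b₂⟩
  intro h1 h2
  set Δ : ℤ := a₁ * b₂ - a₂ * b₁ with hΔ
  have hx1 : (d : ℤ) ∣ Δ * x₁ := by
    have : Δ * x₁ = b₂ * (a₁ * x₁ + b₁ * x₂) - b₁ * (a₂ * x₁ + b₂ * x₂) := by ring
    rw [this]; exact dvd_sub (h1.mul_left _) (h2.mul_left _)
  have hx2 : (d : ℤ) ∣ Δ * x₂ := by
    have : Δ * x₂ = a₁ * (a₂ * x₁ + b₂ * x₂) - a₂ * (a₁ * x₁ + b₁ * x₂) := by ring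
    rw [this]; exact dvd_sub (h2.mul_left _) (h1.mul_left _)
  exact final13 _ _ _ (key13 d hd Δ x₁ hx1) (key13 d hd Δ x₂ hx2)
end

section
/- With Λ(D) = {x ∈ ℤ² : D₁ | L₁(x), D₂ | L₂(x), D₃ | Q(x)} and δ(D) the largest integer δ such that every x ∈ Λ(D) satisfies δ | gcd(x₁,x₂): if gcd(D₁,D₃) and gcd(D₂,D₃) are squarefree, then lcm of the three quantities gcd(D₁,D₃)/gcd(D₁,D₃,Δ₁₃), gcd(D₂,D₃)/gcd(D₂,D₃,Δ₂₃), gcd(D₁,D₂)/gcd(D₁,D₂,Δ₁₂) divides δ(D). -/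
/-!
Let `x ∈ Λ(D)` and `g = gcd(D₁, D₃)`. Eliminating between `g ∣ L₁(x)` and `g ∣ Q(x)` gives
`g ∣ Δ₁₃ xᵢ²`, hence `g / gcd(g, Δ₁₃) ∣ xᵢ²`, and since this divisor of `g` is squarefree it
divides `xᵢ` itself; the pair `L₁, L₂` is handled the same way without squares. The natural
numbers dividing both coordinates of every point of `Λ(D)` are closed under `lcm` and under
taking divisors, so the greatest of them is a multiple of each of them.
-/

lemma Int.natCast_div_gcd_dvd_of_dvd_mul {g : ℕ} (hg : 0 < g) {Δ n : ℤ}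
    (h : (g : ℤ) ∣ Δ * n) : ((g / g.gcd Δ.natAbs : ℕ) : ℤ) ∣ n := by
  have h' : Δ * 0 ≡ Δ * n [ZMOD g] := Int.modEq_iff_dvd.mpr (by simpa using h)
  simpa [Int.modEq_iff_dvd, Int.natCast_div, Int.gcd] using
    Int.ModEq.cancel_left_div_gcd (by exact_mod_cast hg) h'

section Elimination

variable {g : ℕ} {x y : ℤ}

lemma div_gcd_resultant_dvd_of_dvd_linear_forms (hg : 0 < g) {a₁ b₁ a₂ b₂ : ℤ}
    (h₁ : (g : ℤ) ∣ a₁ * x + b₁ * y) (h₂ : (g : ℤ) ∣ a₂ * x + b₂ * y) :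
    ((g / g.gcd (a₁ * b₂ - a₂ * b₁).natAbs : ℕ) : ℤ) ∣ x ∧
      ((g / g.gcd (a₁ * b₂ - a₂ * b₁).natAbs : ℕ) : ℤ) ∣ y := by
  have hx : (g : ℤ) ∣ (a₁ * b₂ - a₂ * b₁) * x := by
    rw [show (a₁ * b₂ - a₂ * b₁) * x = b₂ * (a₁ * x + b₁ * y) - b₁ * (a₂ * x + b₂ * y) by ring]
    exact dvd_sub (h₁.mul_left b₂) (h₂.mul_left b₁)
  have hy : (g : ℤ) ∣ (a₁ * b₂ - a₂ * b₁) * y := by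
    rw [show (a₁ * b₂ - a₂ * b₁) * y = a₁ * (a₂ * x + b₂ * y) - a₂ * (a₁ * x + b₁ * y) by ring]
    exact dvd_sub (h₂.mul_left a₁) (h₁.mul_left a₂)
  exact ⟨Int.natCast_div_gcd_dvd_of_dvd_mul hg hx, Int.natCast_div_gcd_dvd_of_dvd_mul hg hy⟩

lemma div_gcd_resultant_dvd_of_dvd_linear_quadratic (hg : 0 < g) (hsf : Squarefree g)
    {a b a₃ b₃ c₃ : ℤ} (hL : (g : ℤ) ∣ a * x + b * y)
    (hQ : (g : ℤ) ∣ a₃ * x ^ 2 + b₃ * y ^ 2 + c₃ * x * y) :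
    ((g / g.gcd (a₃ * b ^ 2 + b₃ * a ^ 2 - c₃ * a * b).natAbs : ℕ) : ℤ) ∣ x ∧
      ((g / g.gcd (a₃ * b ^ 2 + b₃ * a ^ 2 - c₃ * a * b).natAbs : ℕ) : ℤ) ∣ y := by
  set Δ := a₃ * b ^ 2 + b₃ * a ^ 2 - c₃ * a * b
  have hx : (g : ℤ) ∣ Δ * x ^ 2 := by
    rw [show Δ * x ^ 2 = b ^ 2 * (a₃ * x ^ 2 + b₃ * y ^ 2 + c₃ * x * y) -
      (b₃ * (b * y - a * x) + c₃ * b * x) * (a * x + b * y) by ring]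
    exact dvd_sub (hQ.mul_left _) (hL.mul_left _)
  have hy : (g : ℤ) ∣ Δ * y ^ 2 := by
    rw [show Δ * y ^ 2 = a ^ 2 * (a₃ * x ^ 2 + b₃ * y ^ 2 + c₃ * x * y) -
      (a₃ * (a * x - b * y) + c₃ * a * y) * (a * x + b * y) by ring]
    exact dvd_sub (hQ.mul_left _) (hL.mul_left _)
  have hsf' : Squarefree ((g / g.gcd Δ.natAbs : ℕ) : ℤ) :=
    Int.squarefree_natCast.mpr (hsf.squarefree_of_dvd (Nat.div_dvd_of_dvd (Nat.gcd_dvd_left _ _)))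
  exact ⟨(hsf'.dvd_pow_iff_dvd two_ne_zero).mp (Int.natCast_div_gcd_dvd_of_dvd_mul hg hx),
    (hsf'.dvd_pow_iff_dvd two_ne_zero).mp (Int.natCast_div_gcd_dvd_of_dvd_mul hg hy)⟩

end Elimination

def commonDivisors (Λ : Set (ℤ × ℤ)) : Set ℕ :=
  {δ | ∀ x ∈ Λ, (δ : ℤ) ∣ x.1 ∧ (δ : ℤ) ∣ x.2}

namespace commonDivisors

variable {Λ : Set (ℤ × ℤ)} {a b : ℕ}

lemma lcm_mem (ha : a ∈ commonDivisors Λ) (hb : b ∈ commonDivisors Λ) :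
    a.lcm b ∈ commonDivisors Λ := fun x hx =>
  ⟨Int.natCast_dvd.mpr (Nat.lcm_dvd (Int.natCast_dvd.mp (ha x hx).1) (Int.natCast_dvd.mp (hb x hx).1)),
    Int.natCast_dvd.mpr (Nat.lcm_dvd (Int.natCast_dvd.mp (ha x hx).2) (Int.natCast_dvd.mp (hb x hx).2))⟩

lemma mem_of_dvd (hab : b ∣ a) (ha : a ∈ commonDivisors Λ) : b ∈ commonDivisors Λ :=
  fun x hx =>
    have hab : (b : ℤ) ∣ a := Int.natCast_dvd_natCast.mpr hab
    ⟨hab.trans (ha x hx).1, hab.trans (ha x hx).2⟩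

lemma dvd_of_isGreatest {m : ℕ} (hm : IsGreatest (commonDivisors Λ) m)
    (ha : a ∈ commonDivisors Λ) : a ∣ m := by
  have hlcm : m.lcm a ∈ commonDivisors Λ := lcm_mem hm.1 ha
  have hlcm_pos : 0 < m.lcm a := by
    by_contra! h
    have : m + 1 ≤ m := hm.2 (mem_of_dvd (Nat.le_zero.mp h ▸ dvd_zero (m + 1)) hlcm)
    omega
  have : m.lcm a = m :=
    le_antisymm (hm.2 hlcm) (Nat.le_of_dvd hlcm_pos (Nat.dvd_lcm_left m a))
  exact this ▸ Nat.dvd_lcm_right m a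

end commonDivisors

theorem stmt14_general (a₁ b₁ a₂ b₂ a₃ b₃ c₃ : ℤ) (D₁ D₂ D₃ : ℕ)
    (h₁ : 0 < D₁) (h₂ : 0 < D₂)
    (hsf1 : Squarefree (Nat.gcd D₁ D₃)) (hsf2 : Squarefree (Nat.gcd D₂ D₃))
    (δD : ℕ)
    (hδ : IsGreatest {δ : ℕ | ∀ x : ℤ × ℤ,
        (D₁ : ℤ) ∣ a₁ * x.1 + b₁ * x.2 → (D₂ : ℤ) ∣ a₂ * x.1 + b₂ * x.2 →
        (D₃ : ℤ) ∣ a₃ * x.1 ^ 2 + b₃ * x.2 ^ 2 + c₃ * x.1 * x.2 →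
        (δ : ℤ) ∣ x.1 ∧ (δ : ℤ) ∣ x.2} δD) :
    Nat.lcm (Nat.lcm
        (Nat.gcd D₁ D₃ / Nat.gcd (Nat.gcd D₁ D₃) (a₃ * b₁ ^ 2 + b₃ * a₁ ^ 2 - c₃ * a₁ * b₁).natAbs)
        (Nat.gcd D₂ D₃ / Nat.gcd (Nat.gcd D₂ D₃) (a₃ * b₂ ^ 2 + b₃ * a₂ ^ 2 - c₃ * a₂ * b₂).natAbs))
        (Nat.gcd D₁ D₂ / Nat.gcd (Nat.gcd D₁ D₂) (a₁ * b₂ - a₂ * b₁).natAbs)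
      ∣ δD := by
  set Λ : Set (ℤ × ℤ) := {x | (D₁ : ℤ) ∣ a₁ * x.1 + b₁ * x.2 ∧ (D₂ : ℤ) ∣ a₂ * x.1 + b₂ * x.2 ∧
    (D₃ : ℤ) ∣ a₃ * x.1 ^ 2 + b₃ * x.2 ^ 2 + c₃ * x.1 * x.2}
  have hδΛ : IsGreatest (commonDivisors Λ) δD := by
    simpa only [commonDivisors, Λ, Set.mem_ofPred_eq, and_imp] using hδ
  have gcd_left_dvd {m n : ℕ} {z : ℤ} (h : (m : ℤ) ∣ z) : ((m.gcd n : ℕ) : ℤ) ∣ z :=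
    (Int.natCast_dvd_natCast.mpr (Nat.gcd_dvd_left m n)).trans h
  have gcd_right_dvd {m n : ℕ} {z : ℤ} (h : (n : ℤ) ∣ z) : ((m.gcd n : ℕ) : ℤ) ∣ z :=
    (Int.natCast_dvd_natCast.mpr (Nat.gcd_dvd_right m n)).trans h
  have mem₁₃ := fun x (hx : x ∈ Λ) => div_gcd_resultant_dvd_of_dvd_linear_quadratic
    (Nat.gcd_pos_of_pos_left D₃ h₁) hsf1 (gcd_left_dvd hx.1) (gcd_right_dvd hx.2.2)
  have mem₂₃ := fun x (hx : x ∈ Λ) => div_gcd_resultant_dvd_of_dvd_linear_quadratic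
    (Nat.gcd_pos_of_pos_left D₃ h₂) hsf2 (gcd_left_dvd hx.2.1) (gcd_right_dvd hx.2.2)
  have mem₁₂ := fun x (hx : x ∈ Λ) => div_gcd_resultant_dvd_of_dvd_linear_forms
    (Nat.gcd_pos_of_pos_left D₂ h₁) (gcd_left_dvd hx.1) (gcd_right_dvd hx.2.1)
  exact commonDivisors.dvd_of_isGreatest hδΛ <|
    commonDivisors.lcm_mem (commonDivisors.lcm_mem mem₁₃ mem₂₃) mem₁₂

theorem stmt14 (a₁ b₁ a₂ b₂ a₃ b₃ c₃ : ℤ) (D₁ D₂ D₃ : ℕ)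
    (h₁ : 0 < D₁) (h₂ : 0 < D₂) (h₃ : 0 < D₃)
    (hsf1 : Squarefree (Nat.gcd D₁ D₃)) (hsf2 : Squarefree (Nat.gcd D₂ D₃))
    (δD : ℕ)
    (hδ : IsGreatest {δ : ℕ | ∀ x : ℤ × ℤ,
        (D₁ : ℤ) ∣ a₁ * x.1 + b₁ * x.2 → (D₂ : ℤ) ∣ a₂ * x.1 + b₂ * x.2 →
        (D₃ : ℤ) ∣ a₃ * x.1 ^ 2 + b₃ * x.2 ^ 2 + c₃ * x.1 * x.2 →
        (δ : ℤ) ∣ x.1 ∧ (δ : ℤ) ∣ x.2} δD) :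
    Nat.lcm (Nat.lcm
        (Nat.gcd D₁ D₃ / Nat.gcd (Nat.gcd D₁ D₃) (a₃ * b₁ ^ 2 + b₃ * a₁ ^ 2 - c₃ * a₁ * b₁).natAbs)
        (Nat.gcd D₂ D₃ / Nat.gcd (Nat.gcd D₂ D₃) (a₃ * b₂ ^ 2 + b₃ * a₂ ^ 2 - c₃ * a₂ * b₂).natAbs))
        (Nat.gcd D₁ D₂ / Nat.gcd (Nat.gcd D₁ D₂) (a₁ * b₂ - a₂ * b₁).natAbs)
      ∣ δD :=
  stmt14_general a₁ b₁ a₂ b₂ a₃ b₃ c₃ D₁ D₂ D₃ h₁ h₂ hsf1 hsf2 δD hδ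
end

section
/- Let Q(x₁,x₂) = a₃x₁² + b₃x₂² + c₃x₁x₂ be a real quadratic form with a₃ ≥ 1 and a₃b₃ ≠ 0, and let R ⊆ ℝ² be a bounded convex region contained in the square [−r_∞, r_∞]². Then for every α > 0, the area of {x ∈ R : |Q(x)| ≤ α} is O(r_∞ √α), with an absolute implied constant. -/
/-!
For fixed `x₂`, completing the square in `x₁` turns `|Q(x₁, x₂)| ≤ α` into
`|x₁'² - t| ≤ α / a` for some `t`, so `|x₁'|` lies in `[√(t - α/a), √(t + α/a)]`: two intervals,
each of length at most `√(2α/a)` because `√` is `1/2`-Hölder. Integrating this slice bound over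
`x₂ ∈ [-r, r]` (Fubini) bounds the area by `4√2 · r √α`.
-/

open MeasureTheory Set

theorem Real.sqrt_sub_sqrt_le_sqrt_sub (u v : ℝ) : √v - √u ≤ √(v - u) := by
  rcases le_total v u with hvu | huv
  · linarith [Real.sqrt_le_sqrt hvu, Real.sqrt_nonneg (v - u)]
  rcases le_total u 0 with hu | hu
  · linarith [Real.sqrt_le_sqrt (show v ≤ v - u by linarith), Real.sqrt_nonneg u]
  rw [sub_le_iff_le_add, Real.sqrt_le_iff]
  refine ⟨by positivity, ?_⟩
  nlinarith [Real.sq_sqrt hu, Real.sq_sqrt (sub_nonneg.2 huv), Real.sqrt_nonneg u,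
    Real.sqrt_nonneg (v - u)]

theorem Real.volume_preimage_abs_Icc_le (p q : ℝ) :
    volume (abs ⁻¹' Icc p q) ≤ 2 * ENNReal.ofReal (q - p) := by
  have hsub : abs ⁻¹' Icc p q ⊆ Icc (-q) (-p) ∪ Icc p q := by
    intro z ⟨hp, hq⟩
    rcases le_total 0 z with hz | hz
    · rw [abs_of_nonneg hz] at hp hq
      exact Or.inr ⟨hp, hq⟩
    · rw [abs_of_nonpos hz] at hp hq
      exact Or.inl ⟨by linarith, by linarith⟩
  calc volume (abs ⁻¹' Icc p q)
      ≤ volume (Icc (-q) (-p)) + volume (Icc p q) :=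
        (measure_mono hsub).trans (measure_union_le _ _)
    _ = 2 * ENNReal.ofReal (q - p) := by
        rw [Real.volume_Icc, Real.volume_Icc, neg_sub_neg, two_mul]

theorem Real.volume_setOf_abs_sq_sub_le (t α : ℝ) :
    volume {z : ℝ | |z ^ 2 - t| ≤ α} ≤ 2 * ENNReal.ofReal √(2 * α) := by
  have hsub : {z : ℝ | |z ^ 2 - t| ≤ α} ⊆ abs ⁻¹' Icc √(t - α) √(t + α) := by
    intro z hz
    rw [mem_ofPred_eq, abs_le] at hz
    rw [mem_preimage, ← Real.sqrt_sq_eq_abs]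
    exact ⟨Real.sqrt_le_sqrt (by linarith), Real.sqrt_le_sqrt (by linarith)⟩
  calc volume {z : ℝ | |z ^ 2 - t| ≤ α}
      ≤ 2 * ENNReal.ofReal (√(t + α) - √(t - α)) :=
        (measure_mono hsub).trans (Real.volume_preimage_abs_Icc_le _ _)
    _ ≤ 2 * ENNReal.ofReal √(2 * α) := by
        gcongr
        convert Real.sqrt_sub_sqrt_le_sqrt_sub (t - α) (t + α) using 2
        ring

theorem volume_setOf_abs_binaryQuadratic_le {a : ℝ} (ha : 0 < a) (b c y α : ℝ) :
    volume {x : ℝ | |a * x ^ 2 + b * y ^ 2 + c * x * y| ≤ α} ≤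
      2 * ENNReal.ofReal √(2 * (α / a)) := by
  set t := (c ^ 2 - 4 * a * b) * y ^ 2 / (4 * a ^ 2) with ht
  have hslice : {x : ℝ | |a * x ^ 2 + b * y ^ 2 + c * x * y| ≤ α} =
      (fun x => x + c * y / (2 * a)) ⁻¹' {z | |z ^ 2 - t| ≤ α / a} := by
    ext x
    have hsquare : a * x ^ 2 + b * y ^ 2 + c * x * y = a * ((x + c * y / (2 * a)) ^ 2 - t) := by
      rw [ht]
      field_simp
      ring
    rw [mem_ofPred_eq, mem_preimage, mem_ofPred_eq, hsquare, abs_mul, abs_of_pos ha,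
      le_div_iff₀ ha, mul_comm]
  rw [hslice, measure_preimage_add_right]
  exact Real.volume_setOf_abs_sq_sub_le t (α / a)

theorem MeasureTheory.Measure.prod_le_mul_of_forall_slice_le {α β : Type*} [MeasurableSpace α]
    [MeasurableSpace β] {μ : Measure α} {ν : Measure β} [SFinite μ] [SFinite ν]
    {s : Set (α × β)} (hs : MeasurableSet s) {t : Set β} (ht : MeasurableSet t)
    (hst : ∀ p ∈ s, p.2 ∈ t) {M : ENNReal}
    (hM : ∀ y ∈ t, μ ((fun x => (x, y)) ⁻¹' s) ≤ M) :
    μ.prod ν s ≤ M * ν t := by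
  rw [Measure.prod_apply_symm hs, ← lintegral_indicator_const ht]
  refine lintegral_mono fun y => ?_
  by_cases hy : y ∈ t
  · simpa [indicator_of_mem hy] using hM y hy
  · have hempty : (fun x => (x, y)) ⁻¹' s = ∅ :=
      eq_empty_of_forall_notMem fun x hx => hy (hst _ hx)
    simp [hempty]

open MeasureTheory in
theorem stmt15 : ∃ K : ℝ, 0 < K ∧ ∀ (a b c r : ℝ) (R : Set (ℝ × ℝ)) (α : ℝ),
    1 ≤ a → a * b ≠ 0 → Convex ℝ R → (∀ x ∈ R, |x.1| ≤ r ∧ |x.2| ≤ r) → 0 < α →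
    volume {x ∈ R | |a * x.1 ^ 2 + b * x.2 ^ 2 + c * x.1 * x.2| ≤ α} ≤
      ENNReal.ofReal (K * r * Real.sqrt α) := by
  refine ⟨4 * √2, by positivity, ?_⟩
  intro a b c r R α ha _ _ hR hα
  set T := {x : ℝ × ℝ | |a * x.1 ^ 2 + b * x.2 ^ 2 + c * x.1 * x.2| ≤ α} ∩
    Prod.snd ⁻¹' Icc (-r) r
  have hT : MeasurableSet T :=
    (isClosed_le (by fun_prop) continuous_const).measurableSet.inter
      (measurableSet_Icc.preimage measurable_snd)
  have hRT : {x ∈ R | |a * x.1 ^ 2 + b * x.2 ^ 2 + c * x.1 * x.2| ≤ α} ⊆ T :=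
    fun x hx => ⟨hx.2, abs_le.1 (hR x hx.1).2⟩
  have hslice : ∀ y ∈ Icc (-r) r, volume ((fun x => (x, y)) ⁻¹' T) ≤
      2 * ENNReal.ofReal √(2 * α) := fun y _ =>
    calc volume ((fun x => (x, y)) ⁻¹' T)
        ≤ volume {x : ℝ | |a * x ^ 2 + b * y ^ 2 + c * x * y| ≤ α} :=
          measure_mono fun x hx => hx.1
      _ ≤ 2 * ENNReal.ofReal √(2 * (α / a)) :=
          volume_setOf_abs_binaryQuadratic_le (by linarith) b c y α
      _ ≤ 2 * ENNReal.ofReal √(2 * α) := by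
          gcongr
          exact div_le_self hα.le ha
  calc volume {x ∈ R | |a * x.1 ^ 2 + b * x.2 ^ 2 + c * x.1 * x.2| ≤ α}
      ≤ volume T := measure_mono hRT
    _ ≤ 2 * ENNReal.ofReal √(2 * α) * volume (Icc (-r) r) := by
        rw [Measure.volume_eq_prod]
        exact Measure.prod_le_mul_of_forall_slice_le hT measurableSet_Icc (fun x hx => hx.2)
          hslice
    _ = ENNReal.ofReal (4 * √2 * r * √α) := by
        rw [Real.volume_Icc, ← ENNReal.ofReal_ofNat, ← ENNReal.ofReal_mul (by norm_num),
          ← ENNReal.ofReal_mul (by positivity), Real.sqrt_mul zero_le_two]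
        ring_nf
end

section
/- Define the multiplicative function τ' by τ'(p) = 2 and τ'(p^ν) = (ν+1)² for ν ≥ 2. Then for all positive integers n₁, n₂: τ(n₁)τ(n₂) ≤ τ'(n₁n₂) and τ'(n₁) ≤ τ(n₁)². -/
/-- The multiplicative function `τ'` with `τ'(p) = 2` and `τ'(p^ν) = (ν+1)²` for `ν ≥ 2`. -/
def tau' (n : ℕ) : ℕ :=
  ∏ p ∈ n.primeFactors,
    (if n.factorization p = 1 then 2 else (n.factorization p + 1) ^ 2)

/-!
Both sides are products over primes, so it suffices to compare local factors. Writing `a, b` for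
the exponents of `p` in `n₁, n₂`, the first inequality is `(a + 1)(b + 1) ≤ τ'(p^(a+b))`, which is
`(a + 1)(b + 1) ≤ (a + b + 1)²` except when `a + b = 1`, where both sides equal `2`. The second is
`τ'(p^a) ≤ (a + 1)²`, clear from `2 ≤ 4`.
-/

def tau'Factor (a : ℕ) : ℕ :=
  if a = 1 then 2 else (a + 1) ^ 2

lemma tau'_eq_prod (n : ℕ) :
    tau' n = ∏ p ∈ n.primeFactors, tau'Factor (n.factorization p) :=
  rfl

lemma succ_mul_succ_le_tau'Factor_add (a b : ℕ) : (a + 1) * (b + 1) ≤ tau'Factor (a + b) := by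
  unfold tau'Factor
  split_ifs with h
  · obtain ⟨rfl, rfl⟩ | ⟨rfl, rfl⟩ : a = 0 ∧ b = 1 ∨ a = 1 ∧ b = 0 := by omega
    all_goals rfl
  · nlinarith

lemma tau'Factor_le_sq (a : ℕ) : tau'Factor a ≤ (a + 1) ^ 2 := by
  unfold tau'Factor
  split_ifs with h
  · simp [h]
  · rfl

lemma Nat.card_divisors_eq_prod_of_primeFactors_subset {n : ℕ} (hn : n ≠ 0) {s : Finset ℕ}
    (hs : n.primeFactors ⊆ s) : n.divisors.card = ∏ p ∈ s, (n.factorization p + 1) := by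
  rw [Nat.card_divisors hn]
  refine Finset.prod_subset hs fun p _ hp => ?_
  rw [← Nat.support_factorization, Finsupp.notMem_support_iff] at hp
  rw [hp, zero_add]

theorem card_divisors_mul_card_divisors_le_tau' (m n : ℕ) :
    m.divisors.card * n.divisors.card ≤ tau' (m * n) := by
  rcases eq_or_ne m 0 with rfl | hm
  · simp
  rcases eq_or_ne n 0 with rfl | hn
  · simp
  have hprimes := Nat.primeFactors_mul hm hn
  rw [Nat.card_divisors_eq_prod_of_primeFactors_subset hm (hprimes ▸ Finset.subset_union_left),
    Nat.card_divisors_eq_prod_of_primeFactors_subset hn (hprimes ▸ Finset.subset_union_right),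
    ← Finset.prod_mul_distrib, tau'_eq_prod, Nat.factorization_mul hm hn]
  exact Finset.prod_le_prod' fun p _ => succ_mul_succ_le_tau'Factor_add _ _

theorem tau'_le_card_divisors_sq {n : ℕ} (hn : n ≠ 0) : tau' n ≤ n.divisors.card ^ 2 := by
  rw [tau'_eq_prod, Nat.card_divisors hn, ← Finset.prod_pow]
  exact Finset.prod_le_prod' fun p _ => tau'Factor_le_sq _

theorem stmt16_general (n₁ n₂ : ℕ) (h₁ : 0 < n₁) :
    n₁.divisors.card * n₂.divisors.card ≤ tau' (n₁ * n₂) ∧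
    tau' n₁ ≤ n₁.divisors.card ^ 2 :=
  ⟨card_divisors_mul_card_divisors_le_tau' n₁ n₂, tau'_le_card_divisors_sq h₁.ne'⟩

theorem stmt16 (n₁ n₂ : ℕ) (h₁ : 0 < n₁) (h₂ : 0 < n₂) :
    n₁.divisors.card * n₂.divisors.card ≤ tau' (n₁ * n₂) ∧
    tau' n₁ ≤ n₁.divisors.card ^ 2 :=
  stmt16_general n₁ n₂ h₁
end

section
/- Let h be an arithmetic function with Σ_{d≥1} |h(d)| d^{−1/2+η₀} < ∞ for some η₀ > 0, let S be a finite set of primes, and let g = 1*h (Dirichlet convolution, well-defined since h = g*μ). Then there exists η₁ ∈ (0, η₀) such that Σ over triples (m₁,m₂,m₃), (s₁,s₂,s₃) of positive integers all of whose prime factors lie in S, of |μ(s₁)μ(s₂)μ(s₃)|·|g(m₁m₂m₃)| / (m₁m₂m₃s₁s₂s₃)^{1/2−η₁}, converges. -/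
/-!
Bound `|μ(sᵢ)| ≤ 1` and `|h e| ≤ B e^{1/2 - η₀}`. For `e ∣ M = m₁m₂m₃` and `η₁ ≤ min (η₀/2) (1/4)`
one has `e^{1/2 - η₀} M^{-(1/2 - η₁)} ≤ M^{-η₁}`, so `|g(M)| M^{-(1/2 - η₁)} ≤ B τ(M) M^{-η₁}`, and
`τ` is submultiplicative. The summand is thus dominated by
`B ∏ τ(mᵢ) mᵢ^{-η₁} ∏ sᵢ^{-(1/2 - η₁)}` on `S`-factored arguments. Both `n^{-ε}` and `τ(n) n^{-ε}`
are multiplicative with summable values on prime powers, so by the finite Euler product they are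
summable over `S`-factored `n`, and so is the six-fold product.
-/

open ArithmeticFunction Finset

namespace Nat

theorem card_divisors_mul_le (m n : ℕ) : #(m * n).divisors ≤ #m.divisors * #n.divisors := by
  rw [Nat.divisors_mul]
  exact card_mul_le

theorem summable_indicator_factoredNumbers {R : Type*} [NormedCommRing R] [CompleteSpace R]
    {f : ℕ → R} (hf₁ : f 1 = 1)
    (hmul : ∀ {m n : ℕ}, m.Coprime n → f (m * n) = f m * f n)
    (hsum : ∀ {p : ℕ}, p.Prime → Summable fun k : ℕ => ‖f (p ^ k)‖) (s : Finset ℕ) :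
    Summable ((factoredNumbers s).indicator f) :=
  summable_subtype_iff_indicator.mp <|
    (EulerProduct.summable_and_hasSum_factoredNumbers_prod_filter_prime_tsum hf₁ hmul hsum s).1
      |>.of_norm

theorem summable_indicator_factoredNumbers_rpow_neg (s : Finset ℕ) {ε : ℝ} (hε : 0 < ε) :
    Summable ((factoredNumbers s).indicator fun n : ℕ => (n : ℝ) ^ (-ε)) := by
  refine summable_indicator_factoredNumbers (by simp) (fun {m n} _ => ?_) (fun {p} hp => ?_) s
  · rw [Nat.cast_mul, Real.mul_rpow (Nat.cast_nonneg m) (Nat.cast_nonneg n)]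
  · have hp1 : (1 : ℝ) < p := by exact_mod_cast hp.one_lt
    refine (summable_geometric_of_lt_one (by positivity)
      (Real.rpow_lt_one_of_one_lt_of_neg hp1 (neg_neg_of_pos hε))).congr fun k => ?_
    rw [Real.norm_of_nonneg (by positivity), Nat.cast_pow, Real.rpow_pow_comm (by positivity)]

theorem summable_indicator_factoredNumbers_card_divisors_mul_rpow_neg (s : Finset ℕ) {ε : ℝ}
    (hε : 0 < ε) :
    Summable ((factoredNumbers s).indicator
      fun n : ℕ => (#n.divisors : ℝ) * (n : ℝ) ^ (-ε)) := by
  refine summable_indicator_factoredNumbers (by simp) (fun {m n} hmn => ?_) (fun {p} hp => ?_) s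
  · rw [hmn.card_divisors_mul, Nat.cast_mul, Nat.cast_mul,
      Real.mul_rpow (Nat.cast_nonneg m) (Nat.cast_nonneg n)]
    ring
  · have hp1 : (1 : ℝ) < p := by exact_mod_cast hp.one_lt
    set r : ℝ := (p : ℝ) ^ (-ε)
    have hr : ‖r‖ < 1 := by
      rw [Real.norm_of_nonneg (by positivity)]
      exact Real.rpow_lt_one_of_one_lt_of_neg hp1 (neg_neg_of_pos hε)
    refine ((summable_pow_mul_geometric_of_norm_lt_one 1 hr).add
      (summable_geometric_of_norm_lt_one hr)).congr fun k => ?_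
    rw [← sigma_zero_apply, sigma_zero_apply_prime_pow hp, Real.norm_of_nonneg (by positivity),
      Nat.cast_pow, ← Real.rpow_pow_comm (by positivity)]
    push_cast
    ring

end Nat

theorem Summable.mul_mul_of_nonneg {α β γ : Type*} {f : α → ℝ} {g : β → ℝ} {k : γ → ℝ}
    (hf : Summable f) (hg : Summable g) (hk : Summable k) (hf' : 0 ≤ f) (hg' : 0 ≤ g)
    (hk' : 0 ≤ k) : Summable fun x : α × β × γ => f x.1 * g x.2.1 * k x.2.2 := by
  simpa only [mul_assoc] using hf.mul_of_nonneg (hg.mul_of_nonneg hk hg' hk') hf'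
    fun x => mul_nonneg (hg' x.1) (hk' x.2)

theorem abs_sum_divisors_mul_rpow_le {h : ℕ → ℝ} {η₀ η B : ℝ}
    (hB : ∀ n : ℕ, |h n| * (n : ℝ) ^ (-(1 : ℝ) / 2 + η₀) ≤ B) (hη₀ : 2 * η ≤ η₀)
    (hη : η ≤ 1 / 4) (N : ℕ) :
    |∑ e ∈ N.divisors, h e| * (N : ℝ) ^ (-(1 / 2 - η)) ≤
      B * (#N.divisors * (N : ℝ) ^ (-η)) := by
  have hterm : ∀ e ∈ N.divisors, |h e| * (N : ℝ) ^ (-(1 / 2 - η)) ≤ B * (N : ℝ) ^ (-η) := by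
    intro e he
    obtain ⟨he_dvd, hN⟩ := Nat.mem_divisors.mp he
    have he1 : (1 : ℝ) ≤ e := by exact_mod_cast Nat.pos_of_dvd_of_pos he_dvd (Nat.pos_of_ne_zero hN)
    have heN : (e : ℝ) ≤ N := by exact_mod_cast Nat.le_of_dvd (Nat.pos_of_ne_zero hN) he_dvd
    have hNpos : (0 : ℝ) < N := by linarith
    have hNpow : (N : ℝ) ^ (-(1 / 2 - η)) ≤ (e : ℝ) ^ (-(1 : ℝ) / 2 + η₀) * (N : ℝ) ^ (-η) :=
      calc (N : ℝ) ^ (-(1 / 2 - η)) = (N : ℝ) ^ (2 * η - 1 / 2) * (N : ℝ) ^ (-η) := by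
            rw [← Real.rpow_add hNpos]; ring_nf
        _ ≤ (e : ℝ) ^ (2 * η - 1 / 2) * (N : ℝ) ^ (-η) := by
            gcongr ?_ * _
            exact Real.rpow_le_rpow_of_nonpos (by linarith) heN (by linarith)
        _ ≤ (e : ℝ) ^ (-(1 : ℝ) / 2 + η₀) * (N : ℝ) ^ (-η) := by
            gcongr ?_ * _
            exact Real.rpow_le_rpow_of_exponent_le he1 (by linarith)
    calc |h e| * (N : ℝ) ^ (-(1 / 2 - η))
        ≤ |h e| * ((e : ℝ) ^ (-(1 : ℝ) / 2 + η₀) * (N : ℝ) ^ (-η)) := by gcongr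
      _ = (|h e| * (e : ℝ) ^ (-(1 : ℝ) / 2 + η₀)) * (N : ℝ) ^ (-η) := by ring
      _ ≤ B * (N : ℝ) ^ (-η) := by gcongr; exact hB e
  calc |∑ e ∈ N.divisors, h e| * (N : ℝ) ^ (-(1 / 2 - η))
      ≤ (∑ e ∈ N.divisors, |h e|) * (N : ℝ) ^ (-(1 / 2 - η)) := by
        gcongr; exact abs_sum_le_sum_abs _ _
    _ = ∑ e ∈ N.divisors, |h e| * (N : ℝ) ^ (-(1 / 2 - η)) := sum_mul _ _ _
    _ ≤ ∑ _e ∈ N.divisors, B * (N : ℝ) ^ (-η) := sum_le_sum hterm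
    _ = B * (#N.divisors * (N : ℝ) ^ (-η)) := by rw [sum_const, nsmul_eq_mul]; ring

theorem abs_moebius_mul_abs_sum_divisors_div_rpow_le {h : ℕ → ℝ} {η₀ η B : ℝ}
    (hB : ∀ n : ℕ, |h n| * (n : ℝ) ^ (-(1 : ℝ) / 2 + η₀) ≤ B) (hη₀ : 2 * η ≤ η₀)
    (hη : η ≤ 1 / 4) (m₁ m₂ m₃ s₁ s₂ s₃ : ℕ) :
    |(moebius s₁ : ℝ)| * |(moebius s₂ : ℝ)| * |(moebius s₃ : ℝ)| *
          |∑ e ∈ (m₁ * m₂ * m₃).divisors, h e| /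
        ((m₁ * m₂ * m₃ * s₁ * s₂ * s₃ : ℕ) : ℝ) ^ (1 / 2 - η) ≤
      B * ((#m₁.divisors * (m₁ : ℝ) ^ (-η)) * (#m₂.divisors * (m₂ : ℝ) ^ (-η)) *
          (#m₃.divisors * (m₃ : ℝ) ^ (-η))) *
        ((s₁ : ℝ) ^ (-(1 / 2 - η)) * (s₂ : ℝ) ^ (-(1 / 2 - η)) * (s₃ : ℝ) ^ (-(1 / 2 - η))) := by
  have hB0 : 0 ≤ B := (abs_nonneg _).trans (by simpa using hB 1)
  have hcast : ∀ (a b : ℕ) (r : ℝ), ((a * b : ℕ) : ℝ) ^ r = (a : ℝ) ^ r * (b : ℝ) ^ r :=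
    fun a b r => by rw [Nat.cast_mul, Real.mul_rpow (Nat.cast_nonneg a) (Nat.cast_nonneg b)]
  have hμ : |(moebius s₁ : ℝ)| * |(moebius s₂ : ℝ)| * |(moebius s₃ : ℝ)| ≤ 1 := by
    have hμ1 : ∀ s, |(moebius s : ℝ)| ≤ 1 := fun s => by exact_mod_cast abs_moebius_le_one
    exact mul_le_one₀ (mul_le_one₀ (hμ1 s₁) (abs_nonneg _) (hμ1 s₂)) (abs_nonneg _) (hμ1 s₃)
  have hτ : (#(m₁ * m₂ * m₃).divisors : ℝ) ≤ #m₁.divisors * #m₂.divisors * #m₃.divisors := by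
    exact_mod_cast (Nat.card_divisors_mul_le _ _).trans
      (Nat.mul_le_mul_right _ (Nat.card_divisors_mul_le _ _))
  calc |(moebius s₁ : ℝ)| * |(moebius s₂ : ℝ)| * |(moebius s₃ : ℝ)| *
          |∑ e ∈ (m₁ * m₂ * m₃).divisors, h e| /
        ((m₁ * m₂ * m₃ * s₁ * s₂ * s₃ : ℕ) : ℝ) ^ (1 / 2 - η)
      = |(moebius s₁ : ℝ)| * |(moebius s₂ : ℝ)| * |(moebius s₃ : ℝ)| *
          (|∑ e ∈ (m₁ * m₂ * m₃).divisors, h e| * ((m₁ * m₂ * m₃ : ℕ) : ℝ) ^ (-(1 / 2 - η))) *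
          ((s₁ : ℝ) ^ (-(1 / 2 - η)) * (s₂ : ℝ) ^ (-(1 / 2 - η)) * (s₃ : ℝ) ^ (-(1 / 2 - η))) := by
        rw [div_eq_mul_inv, ← Real.rpow_neg (Nat.cast_nonneg _)]
        simp only [hcast]
        ring
    _ ≤ 1 * (B * (#(m₁ * m₂ * m₃).divisors * ((m₁ * m₂ * m₃ : ℕ) : ℝ) ^ (-η))) *
          ((s₁ : ℝ) ^ (-(1 / 2 - η)) * (s₂ : ℝ) ^ (-(1 / 2 - η)) * (s₃ : ℝ) ^ (-(1 / 2 - η))) := by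
        gcongr ?_ * ?_ * _
        exact abs_sum_divisors_mul_rpow_le hB hη₀ hη _
    _ ≤ _ := by
        rw [one_mul, hcast, hcast]
        gcongr B * ?_ * _
        calc (#(m₁ * m₂ * m₃).divisors : ℝ) * ((m₁ : ℝ) ^ (-η) * (m₂ : ℝ) ^ (-η) * (m₃ : ℝ) ^ (-η))
            ≤ #m₁.divisors * #m₂.divisors * #m₃.divisors *
                ((m₁ : ℝ) ^ (-η) * (m₂ : ℝ) ^ (-η) * (m₃ : ℝ) ^ (-η)) := by gcongr
          _ = _ := by ring

open ArithmeticFunction in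
theorem stmt19_general (h : ℕ → ℝ) (η₀ : ℝ) (hη₀ : 0 < η₀)
    (hsum : Summable (fun d : ℕ => |h d| * (d : ℝ) ^ (-(1 : ℝ) / 2 + η₀)))
    (S : Finset ℕ) :
    ∃ η₁ : ℝ, 0 < η₁ ∧ η₁ < η₀ ∧
      Summable (fun t : (ℕ × ℕ × ℕ) × (ℕ × ℕ × ℕ) =>
        if 0 < t.1.1 ∧ 0 < t.1.2.1 ∧ 0 < t.1.2.2 ∧
           0 < t.2.1 ∧ 0 < t.2.2.1 ∧ 0 < t.2.2.2 ∧
           t.1.1.primeFactors ⊆ S ∧ t.1.2.1.primeFactors ⊆ S ∧ t.1.2.2.primeFactors ⊆ S ∧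
           t.2.1.primeFactors ⊆ S ∧ t.2.2.1.primeFactors ⊆ S ∧ t.2.2.2.primeFactors ⊆ S then
          |(moebius t.2.1 : ℝ)| * |(moebius t.2.2.1 : ℝ)| * |(moebius t.2.2.2 : ℝ)| *
            |∑ e ∈ (t.1.1 * t.1.2.1 * t.1.2.2).divisors, h e| /
            ((t.1.1 * t.1.2.1 * t.1.2.2 * t.2.1 * t.2.2.1 * t.2.2.2 : ℕ) : ℝ) ^
              ((1 : ℝ) / 2 - η₁)
        else 0) := by
  obtain ⟨B, hB⟩ : ∃ B, ∀ n : ℕ, |h n| * (n : ℝ) ^ (-(1 : ℝ) / 2 + η₀) ≤ B :=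
    ⟨_, fun n => hsum.le_tsum n fun _ _ => by positivity⟩
  have hB0 : 0 ≤ B := (abs_nonneg _).trans (by simpa using hB 1)
  set η₁ := min (η₀ / 2) (1 / 4)
  have hη₁ : 0 < η₁ := by positivity
  have h2η₁ : 2 * η₁ ≤ η₀ := by linarith [min_le_left (η₀ / 2) (1 / 4)]
  have hη₁' : η₁ ≤ 1 / 4 := min_le_right _ _
  set D := (Nat.factoredNumbers S).indicator fun n : ℕ => (#n.divisors : ℝ) * (n : ℝ) ^ (-η₁)
  set W := (Nat.factoredNumbers S).indicator fun n : ℕ => (n : ℝ) ^ (-(1 / 2 - η₁))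
  have hD0 : 0 ≤ D := Set.indicator_nonneg fun _ _ => by positivity
  have hW0 : 0 ≤ W := Set.indicator_nonneg fun _ _ => by positivity
  have hD := Nat.summable_indicator_factoredNumbers_card_divisors_mul_rpow_neg S hη₁
  have hW := Nat.summable_indicator_factoredNumbers_rpow_neg S (by linarith : 0 < 1 / 2 - η₁)
  have hDDD : ∀ m : ℕ × ℕ × ℕ, 0 ≤ D m.1 * D m.2.1 * D m.2.2 :=
    fun m => mul_nonneg (mul_nonneg (hD0 _) (hD0 _)) (hD0 _)
  have hWWW : ∀ s : ℕ × ℕ × ℕ, 0 ≤ W s.1 * W s.2.1 * W s.2.2 :=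
    fun s => mul_nonneg (mul_nonneg (hW0 _) (hW0 _)) (hW0 _)
  have hmajorant := ((hD.mul_mul_of_nonneg hD hD hD0 hD0 hD0).mul_of_nonneg
    (hW.mul_mul_of_nonneg hW hW hW0 hW0 hW0) hDDD hWWW).mul_left B
  refine ⟨η₁, hη₁, by linarith, hmajorant.of_nonneg_of_le (fun t => ?_) fun t => ?_⟩
  · split_ifs <;> positivity
  obtain ⟨⟨m₁, m₂, m₃⟩, s₁, s₂, s₃⟩ := t
  split_ifs with hc
  · obtain ⟨hm₁, hm₂, hm₃, hs₁, hs₂, hs₃, hm₁S, hm₂S, hm₃S, hs₁S, hs₂S, hs₃S⟩ := hc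
    have hmem : ∀ {n : ℕ}, 0 < n → n.primeFactors ⊆ S → n ∈ Nat.factoredNumbers S :=
      fun hn hnS => Nat.mem_factoredNumbers_iff_primeFactors_subset.mpr ⟨hn.ne', hnS⟩
    rw [← mul_assoc]
    simp only [Set.indicator_of_mem (hmem hm₁ hm₁S), Set.indicator_of_mem (hmem hm₂ hm₂S),
      Set.indicator_of_mem (hmem hm₃ hm₃S), Set.indicator_of_mem (hmem hs₁ hs₁S),
      Set.indicator_of_mem (hmem hs₂ hs₂S), Set.indicator_of_mem (hmem hs₃ hs₃S)]
    exact abs_moebius_mul_abs_sum_divisors_div_rpow_le hB h2η₁ hη₁' m₁ m₂ m₃ s₁ s₂ s₃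
  · exact mul_nonneg hB0 (mul_nonneg (hDDD _) (hWWW _))

open ArithmeticFunction in
theorem stmt19 (h : ℕ → ℝ) (η₀ : ℝ) (hη₀ : 0 < η₀)
    (hsum : Summable (fun d : ℕ => |h d| * (d : ℝ) ^ (-(1 : ℝ) / 2 + η₀)))
    (S : Finset ℕ) (hS : ∀ p ∈ S, p.Prime) :
    ∃ η₁ : ℝ, 0 < η₁ ∧ η₁ < η₀ ∧
      Summable (fun t : (ℕ × ℕ × ℕ) × (ℕ × ℕ × ℕ) =>
        if 0 < t.1.1 ∧ 0 < t.1.2.1 ∧ 0 < t.1.2.2 ∧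
           0 < t.2.1 ∧ 0 < t.2.2.1 ∧ 0 < t.2.2.2 ∧
           t.1.1.primeFactors ⊆ S ∧ t.1.2.1.primeFactors ⊆ S ∧ t.1.2.2.primeFactors ⊆ S ∧
           t.2.1.primeFactors ⊆ S ∧ t.2.2.1.primeFactors ⊆ S ∧ t.2.2.2.primeFactors ⊆ S then
          |(moebius t.2.1 : ℝ)| * |(moebius t.2.2.1 : ℝ)| * |(moebius t.2.2.2 : ℝ)| *
            |∑ e ∈ (t.1.1 * t.1.2.1 * t.1.2.2).divisors, h e| /
            ((t.1.1 * t.1.2.1 * t.1.2.2 * t.2.1 * t.2.2.1 * t.2.2.2 : ℕ) : ℝ) ^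
              ((1 : ℝ) / 2 - η₁)
        else 0) :=
  stmt19_general h η₀ hη₀ hsum S
end
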